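/- arXiv:1907.10184 — 5 statements merged into one kernel-verified Lean document; each statement's English description precedes it below -/
import Mathlib

section
/- Let S ⊆ {−1,0,1}^d be any stepset and let w : S → ℝ_{>0} be a central weighting. Then there exist a vector α ∈ (ℝ_{>0})^d and a real constant β > 0 such that for every n ≥ 0, the weighted sum over all orthant-confined walks of length n of the product of the weights of their steps equals β^n · Σ_{ι ∈ ℤ_{≥0}^d} q(ι;n) · α_1^{ι_1}⋯α_d^{ι_d}, where q(ι;n) is the number of orthant-confined walks of length n ending at ι. -/
open scoped BigOperators Classical

/-- `S` is a subset of `{-1,0,1}^d`. -/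
def IsStepset (d : ℕ) (S : Finset (Fin d → ℤ)) : Prop :=
  ∀ σ ∈ S, ∀ j, σ j = -1 ∨ σ j = 0 ∨ σ j = 1

/-- All partial sums of the walk lie in the nonnegative orthant. -/
def Confined (d : ℕ) {n : ℕ} (w : Fin n → (Fin d → ℤ)) : Prop :=
  ∀ k : ℕ, k ≤ n → ∀ j,
    0 ≤ ∑ i ∈ Finset.univ.filter (fun i : Fin n => (i : ℕ) < k), w i j

/-- The weight of a walk: the product of the weights of its steps. -/
noncomputable def walkWeight (d : ℕ) {n : ℕ} (w' : (Fin d → ℤ) → ℝ)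
    (w : Fin n → (Fin d → ℤ)) : ℝ :=
  ∏ i, w' (w i)

/-- A weighting is central if any two orthant-confined walks of the same length
ending at the same point have the same weight. -/
def Central (d : ℕ) (S : Finset (Fin d → ℤ)) (w' : (Fin d → ℤ) → ℝ) : Prop :=
  ∀ n : ℕ, ∀ u v : Fin n → {σ // σ ∈ S},
    Confined d (fun i => (u i).1) → Confined d (fun i => (v i).1) →
    (∀ j, ∑ i, (u i).1 j = ∑ i, (v i).1 j) →
    walkWeight d w' (fun i => (u i).1) = walkWeight d w' (fun i => (v i).1)

/-- `q(ι;n)`: the number of orthant-confined walks of length `n` ending at `ι`. -/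
noncomputable def qpoint (d : ℕ) (S : Finset (Fin d → ℤ)) (n : ℕ) (ι : Fin d → ℕ) : ℕ :=
  (Finset.univ.filter (fun w : Fin n → {σ // σ ∈ S} =>
      Confined d (fun i => (w i).1) ∧ ∀ j, ∑ i, (w i).1 j = (ι j : ℤ))).card

set_option linter.dupNamespace false

namespace CWAux

variable {d : ℕ}



variable {d : ℕ}

lemma comp_append {α β : Type*} {m n : ℕ} (g : α → β) (u : Fin m → α) (v : Fin n → α) :
    (fun i => g (Fin.append u v i)) = Fin.append (fun i => g (u i)) (fun i => g (v i)) := by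
  funext i
  induction i using Fin.addCases with
  | left i => simp [Fin.append_left]
  | right i => simp [Fin.append_right]

lemma filter_sum_append {M : Type*} [AddCommMonoid M] {m n : ℕ} (f : Fin (m + n) → M) (k : ℕ) :
    ∑ i ∈ Finset.univ.filter (fun i : Fin (m + n) => (i : ℕ) < k), f i
      = (∑ i ∈ Finset.univ.filter (fun i : Fin m => (i : ℕ) < k), f (Fin.castAdd n i))
        + ∑ i ∈ Finset.univ.filter (fun i : Fin n => (i : ℕ) < k - m), f (Fin.natAdd m i) := by
  rw [Finset.sum_filter, Finset.sum_filter, Finset.sum_filter, Fin.sum_univ_add]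
  congr 1
  refine Finset.sum_congr rfl fun i _ => ?_
  have h : (m + (i : ℕ) < k) ↔ (i : ℕ) < k - m := by omega
  simp only [Fin.coe_natAdd]
  rw [if_congr h rfl rfl]

lemma confined_append {m n : ℕ} {u : Fin m → (Fin d → ℤ)} {v : Fin n → (Fin d → ℤ)}
    (hu : Confined d u) (hv : Confined d v) : Confined d (Fin.append u v) := by
  intro k hk j
  rw [filter_sum_append (fun i => Fin.append u v i j) k]
  have hfil : (Finset.univ.filter (fun i : Fin m => (i : ℕ) < k))
      = Finset.univ.filter (fun i : Fin m => (i : ℕ) < min k m) := by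
    apply Finset.filter_congr
    intro i _
    have := i.isLt
    constructor <;> (intro; omega)
  have h1 : ∑ i ∈ Finset.univ.filter (fun i : Fin m => (i : ℕ) < k), Fin.append u v (Fin.castAdd n i) j
      = ∑ i ∈ Finset.univ.filter (fun i : Fin m => (i : ℕ) < min k m), u i j := by
    rw [hfil]
    exact Finset.sum_congr rfl fun i _ => by rw [Fin.append_left]
  have h2 : ∑ i ∈ Finset.univ.filter (fun i : Fin n => (i : ℕ) < k - m), Fin.append u v (Fin.natAdd m i) j
      = ∑ i ∈ Finset.univ.filter (fun i : Fin n => (i : ℕ) < k - m), v i j :=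
    Finset.sum_congr rfl fun i _ => by rw [Fin.append_right]
  rw [h1, h2]
  exact add_nonneg (hu (min k m) (min_le_right _ _) j) (hv (k - m) (by omega) j)




variable {d : ℕ} (S : Finset (Fin d → ℤ)) (w' : (Fin d → ℤ) → ℝ)

/-- Achievable (length, endpoint) pairs. -/
def Ach : Set (ℤ × (Fin d → ℤ)) :=
  {p | ∃ (n : ℕ) (w : Fin n → {σ // σ ∈ S}), Confined d (fun i => (w i).1) ∧
        p.1 = (n : ℤ) ∧ p.2 = fun j => ∑ i, (w i).1 j}

/-- The common weight of walks realizing a given achievable pair. -/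
noncomputable def F (p : ℤ × (Fin d → ℤ)) : ℝ :=
  if h : p ∈ Ach S then walkWeight d w' (fun i => (h.choose_spec.choose i).1) else 1

variable {S w'}

lemma central_eq (hcentral : Central d S w') {m n : ℕ} (hmn : m = n)
    (u : Fin m → {σ // σ ∈ S}) (v : Fin n → {σ // σ ∈ S})
    (hu : Confined d (fun i => (u i).1)) (hv : Confined d (fun i => (v i).1))
    (he : ∀ j, ∑ i, (u i).1 j = ∑ i, (v i).1 j) :
    walkWeight d w' (fun i => (u i).1) = walkWeight d w' (fun i => (v i).1) := by
  subst hmn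
  exact hcentral _ u v hu hv he

lemma F_spec (hcentral : Central d S w') {n : ℕ} (w : Fin n → {σ // σ ∈ S})
    (hconf : Confined d (fun i => (w i).1)) :
    F S w' ((n : ℤ), fun j => ∑ i, (w i).1 j) = walkWeight d w' (fun i => (w i).1) := by
  have h : ((n : ℤ), fun j => ∑ i, (w i).1 j) ∈ Ach S := ⟨n, w, hconf, rfl, rfl⟩
  rw [F, dif_pos h]
  obtain ⟨hc, hlen, hend⟩ := h.choose_spec.choose_spec
  have hm' : ((h.choose : ℤ)) = (n : ℤ) := by simpa using hlen.symm
  have hm : h.choose = n := by exact_mod_cast hm' 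
  exact central_eq hcentral hm _ w hc hconf fun j => (congrFun hend j).symm

lemma F_pos (hwpos : ∀ σ ∈ S, 0 < w' σ) (p : ℤ × (Fin d → ℤ)) : 0 < F S w' p := by
  rw [F]
  split
  · exact Finset.prod_pos fun i _ => hwpos _ (Subtype.property _)
  · exact one_pos

lemma walkWeight_append {m n : ℕ} (u : Fin m → {σ // σ ∈ S}) (v : Fin n → {σ // σ ∈ S}) :
    walkWeight d w' (fun i => (Fin.append u v i).1)
      = walkWeight d w' (fun i => (u i).1) * walkWeight d w' (fun i => (v i).1) := by
  rw [walkWeight, walkWeight, walkWeight, Fin.prod_univ_add]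
  congr 1
  · exact Finset.prod_congr rfl fun i _ => by rw [Fin.append_left]
  · exact Finset.prod_congr rfl fun i _ => by rw [Fin.append_right]

lemma sum_append_eq {m n : ℕ} (u : Fin m → {σ // σ ∈ S}) (v : Fin n → {σ // σ ∈ S}) (j : Fin d) :
    ∑ i, (Fin.append u v i).1 j = (∑ i, (u i).1 j) + ∑ i, (v i).1 j := by
  rw [Fin.sum_univ_add]
  congr 1
  · exact Finset.sum_congr rfl fun i _ => by rw [Fin.append_left]
  · exact Finset.sum_congr rfl fun i _ => by rw [Fin.append_right]

lemma ach_zero : (0 : ℤ × (Fin d → ℤ)) ∈ Ach S := by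
  refine ⟨0, Fin.elim0, fun k hk j => ?_, by simp, ?_⟩
  · simp
  · funext j; simp

lemma ach_add {p q : ℤ × (Fin d → ℤ)} (hp : p ∈ Ach S) (hq : q ∈ Ach S) : p + q ∈ Ach S := by
  obtain ⟨m, u, hu, hpm, hpe⟩ := hp
  obtain ⟨n, v, hv, hqn, hqe⟩ := hq
  refine ⟨m + n, Fin.append u v, ?_, ?_, ?_⟩
  · rw [comp_append (fun σ : {σ // σ ∈ S} => σ.1) u v]
    exact confined_append hu hv
  · rw [Prod.fst_add, hpm, hqn]; push_cast; ring
  · funext j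
    rw [Prod.snd_add, Pi.add_apply, hpe, hqe, sum_append_eq]

lemma F_mul (hcentral : Central d S w') {p q : ℤ × (Fin d → ℤ)}
    (hp : p ∈ Ach S) (hq : q ∈ Ach S) :
    F S w' (p + q) = F S w' p * F S w' q := by
  obtain ⟨m, u, hu, hpm, hpe⟩ := hp
  obtain ⟨n, v, hv, hqn, hqe⟩ := hq
  obtain ⟨p1, p2⟩ := p
  obtain ⟨q1, q2⟩ := q
  simp only at hpm hpe hqn hqe
  subst hpm hpe hqn hqe
  have hcat : Confined d (fun i => (Fin.append u v i).1) := by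
    rw [comp_append (fun σ : {σ // σ ∈ S} => σ.1) u v]
    exact confined_append hu hv
  have happ : ((m : ℤ), fun j => ∑ i, (u i).1 j) + ((n : ℤ), fun j => ∑ i, (v i).1 j)
      = (((m + n : ℕ) : ℤ), fun j => ∑ i, (Fin.append u v i).1 j) := by
    refine Prod.ext ?_ ?_
    · push_cast; rfl
    · funext j
      show (∑ i, (u i).1 j) + (∑ i, (v i).1 j) = ∑ i, (Fin.append u v i).1 j
      exact (sum_append_eq u v j).symm
  rw [happ, F_spec hcentral _ hcat, F_spec hcentral u hu, F_spec hcentral v hv,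
    walkWeight_append]


variable (S w') in
/-- Extension of the log-weight to differences of achievable pairs. -/
noncomputable def psi (p : ℤ × (Fin d → ℤ)) : ℝ :=
  if h : ∃ a, a ∈ Ach S ∧ ∃ b, b ∈ Ach S ∧ p = a - b then
    Real.log (F S w' h.choose) - Real.log (F S w' h.choose_spec.2.choose) else 0

variable {hh : True}

lemma F_zero (hcentral : Central d S w') : F S w' (0 : ℤ × (Fin d → ℤ)) = 1 := by
  have h0 : (0 : ℤ × (Fin d → ℤ))
      = (((0 : ℕ) : ℤ), fun j => ∑ i : Fin 0, ((Fin.elim0 : Fin 0 → {σ // σ ∈ S}) i).1 j) := by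
    refine Prod.ext (by simp) ?_
    funext j; simp
  rw [h0, F_spec hcentral _ (by intro k hk j; simp)]
  simp [walkWeight]

lemma logF_add (hwpos : ∀ σ ∈ S, 0 < w' σ) (hcentral : Central d S w')
    {a b : ℤ × (Fin d → ℤ)} (ha : a ∈ Ach S) (hb : b ∈ Ach S) :
    Real.log (F S w' (a + b)) = Real.log (F S w' a) + Real.log (F S w' b) := by
  rw [F_mul hcentral ha hb, Real.log_mul (F_pos hwpos _).ne' (F_pos hwpos _).ne']

lemma psi_spec (hwpos : ∀ σ ∈ S, 0 < w' σ) (hcentral : Central d S w')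
    {a b : ℤ × (Fin d → ℤ)} (ha : a ∈ Ach S) (hb : b ∈ Ach S) :
    psi S w' (a - b) = Real.log (F S w' a) - Real.log (F S w' b) := by
  have h : ∃ a', a' ∈ Ach S ∧ ∃ b', b' ∈ Ach S ∧ a - b = a' - b' := ⟨a, ha, b, hb, rfl⟩
  rw [psi, dif_pos h]
  have ha' := h.choose_spec.1
  have hb' := h.choose_spec.2.choose_spec.1
  have heq := h.choose_spec.2.choose_spec.2
  rw [sub_eq_sub_iff_add_eq_add] at heq
  have hL : Real.log (F S w' a) + Real.log (F S w' h.choose_spec.2.choose)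
      = Real.log (F S w' h.choose) + Real.log (F S w' b) := by
    rw [← logF_add hwpos hcentral ha hb', ← logF_add hwpos hcentral ha' hb, heq]
  linarith

lemma psi_ach (hwpos : ∀ σ ∈ S, 0 < w' σ) (hcentral : Central d S w')
    {a : ℤ × (Fin d → ℤ)} (ha : a ∈ Ach S) :
    psi S w' a = Real.log (F S w' a) := by
  have h := psi_spec hwpos hcentral ha (ach_zero (S := S))
  rw [sub_zero] at h
  rw [h, F_zero hcentral, Real.log_one, sub_zero]

lemma ach_nsmul {a : ℤ × (Fin d → ℤ)} (k : ℕ) (ha : a ∈ Ach S) : k • a ∈ Ach S := by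
  induction k with
  | zero => simpa using ach_zero (S := S)
  | succ k ih => rw [succ_nsmul]; exact ach_add ih ha

lemma mem_span_ach {x : ℤ × (Fin d → ℤ)} (hx : x ∈ Submodule.span ℤ (Ach S)) :
    ∃ a ∈ Ach S, ∃ b ∈ Ach S, x = a - b := by
  induction hx using Submodule.span_induction with
  | mem x h => exact ⟨x, h, 0, ach_zero, (sub_zero x).symm⟩
  | zero => exact ⟨0, ach_zero, 0, ach_zero, by simp⟩
  | add x y _ _ hx hy =>
      obtain ⟨a, ha, b, hb, rfl⟩ := hx
      obtain ⟨c, hc, e, he, rfl⟩ := hy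
      exact ⟨a + c, ach_add ha hc, b + e, ach_add hb he, by abel⟩
  | smul z x _ hx =>
      obtain ⟨a, ha, b, hb, rfl⟩ := hx
      rcases le_or_gt 0 z with hz | hz
      · refine ⟨z.toNat • a, ach_nsmul _ ha, z.toNat • b, ach_nsmul _ hb, ?_⟩
        rw [smul_sub]
        congr 1 <;> rw [← natCast_zsmul, Int.toNat_of_nonneg hz]
      · refine ⟨(-z).toNat • b, ach_nsmul _ hb, (-z).toNat • a, ach_nsmul _ ha, ?_⟩
        have hk : (((-z).toNat : ℤ)) = -z := Int.toNat_of_nonneg (by omega)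
        have hzz : z • (a - b) = (((-z).toNat : ℤ)) • b - (((-z).toNat : ℤ)) • a := by
          rw [hk, smul_sub, neg_smul, neg_smul]
          abel
        rw [hzz, natCast_zsmul, natCast_zsmul]

lemma exists_hom (hwpos : ∀ σ ∈ S, 0 < w' σ) (hcentral : Central d S w') :
    ∃ ℓ : (ℤ × (Fin d → ℤ)) →+ ℝ, ∀ p ∈ Ach S, ℓ p = Real.log (F S w' p) := by
  classical
  set G := Submodule.span ℤ (Ach S) with hG
  have hpsi_add : ∀ x y : G, psi S w' ((x : ℤ × (Fin d → ℤ)) + y) = psi S w' x + psi S w' y := by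
    rintro ⟨x, hx⟩ ⟨y, hy⟩
    obtain ⟨a, ha, b, hb, rfl⟩ := mem_span_ach hx
    obtain ⟨c, hc, e, he, rfl⟩ := mem_span_ach hy
    have h1 : (a - b) + (c - e) = (a + c) - (b + e) := by abel
    simp only [h1]
    rw [psi_spec hwpos hcentral (ach_add ha hc) (ach_add hb he),
        psi_spec hwpos hcentral ha hb, psi_spec hwpos hcentral hc he,
        logF_add hwpos hcentral ha hc, logF_add hwpos hcentral hb he]
    ring
  have hpsi_zero : psi S w' ((0 : G) : ℤ × (Fin d → ℤ)) = 0 := by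
    rw [Submodule.coe_zero, psi_ach hwpos hcentral (ach_zero (S := S)), F_zero hcentral,
      Real.log_one]
  let phi : G →+ ℝ :=
    { toFun := fun x => psi S w' x.1
      map_zero' := hpsi_zero
      map_add' := fun x y => hpsi_add x y }
  obtain ⟨ℓ, hℓ⟩ := Module.Baer.extension_property_addMonoidHom (Module.Baer.of_divisible ℝ)
      (G.subtype.toAddMonoidHom) Subtype.val_injective phi
  refine ⟨ℓ, fun p hp => ?_⟩
  have hmem : p ∈ G := Submodule.subset_span hp
  have := DFunLike.congr_fun hℓ ⟨p, hmem⟩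
  simpa [phi, psi_ach hwpos hcentral hp] using this
lemma exists_eval (hwpos : ∀ σ ∈ S, 0 < w' σ) (hcentral : Central d S w') :
    ∃ (α : Fin d → ℝ) (β : ℝ), (∀ j, 0 < α j) ∧ 0 < β ∧
      ∀ (n : ℕ) (ι : Fin d → ℕ), ((n : ℤ), fun j => (ι j : ℤ)) ∈ Ach S →
        F S w' ((n : ℤ), fun j => (ι j : ℤ)) = β ^ n * ∏ j, α j ^ (ι j) := by
  classical
  obtain ⟨ℓ, hℓ⟩ := exists_hom hwpos hcentral
  refine ⟨fun j => Real.exp (ℓ ((0 : ℤ), Pi.single j 1)), Real.exp (ℓ ((1 : ℤ), 0)),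
    fun j => Real.exp_pos _, Real.exp_pos _, fun n ι hach => ?_⟩
  have hdec : (((n : ℤ), fun j => (ι j : ℤ)) : ℤ × (Fin d → ℤ))
      = (n : ℤ) • ((1 : ℤ), (0 : Fin d → ℤ))
        + ∑ j, (ι j : ℤ) • ((0 : ℤ), Pi.single j (1 : ℤ)) := by
    refine Prod.ext ?_ ?_
    · rw [Prod.fst_add, Prod.fst_sum]
      simp [Prod.smul_fst, smul_eq_mul]
    · funext j'
      rw [Prod.snd_add, Prod.snd_sum]
      simp [Prod.smul_snd, Finset.sum_apply, Pi.single_apply]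
  have hFe : F S w' ((n : ℤ), fun j => (ι j : ℤ))
      = Real.exp (ℓ ((n : ℤ), fun j => (ι j : ℤ))) := by
    rw [hℓ _ hach, Real.exp_log (F_pos hwpos _)]
  rw [hFe, hdec, map_add, map_zsmul, map_sum, zsmul_eq_mul, Real.exp_add]
  congr 1
  · push_cast
    rw [Real.exp_nat_mul]
  · rw [Real.exp_sum]
    refine Finset.prod_congr rfl fun j _ => ?_
    rw [map_zsmul, zsmul_eq_mul]
    push_cast
    rw [Real.exp_nat_mul]
variable (S) in
/-- The endpoint of a walk, as a vector of naturals. -/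
def epN {n : ℕ} (w : Fin n → {σ // σ ∈ S}) : Fin d → ℕ :=
  fun j => (∑ i, (w i).1 j).toNat

end CWAux

/-- Proposition: a central weighting is given by evaluation of the complete
generating function at a weight vector `α`, up to a length rescaling `β`. -/
theorem central_weighting_is_evaluation
    (d : ℕ) (hd : 1 ≤ d) (S : Finset (Fin d → ℤ)) (hstep : IsStepset d S)
    (w' : (Fin d → ℤ) → ℝ) (hw : ∀ σ ∈ S, 0 < w' σ)
    (hcentral : Central d S w') :
    ∃ (α : Fin d → ℝ) (β : ℝ), (∀ j, 0 < α j) ∧ 0 < β ∧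
      ∀ n : ℕ,
        (∑ w ∈ Finset.univ.filter
            (fun w : Fin n → {σ // σ ∈ S} => Confined d (fun i => (w i).1)),
          walkWeight d w' (fun i => (w i).1))
        = β ^ n * ∑' ι : Fin d → ℕ, (qpoint d S n ι : ℝ) * ∏ j, α j ^ (ι j) := by
  classical
  obtain ⟨α, β, hα, hβ, heval⟩ := CWAux.exists_eval hw hcentral
  refine ⟨α, β, hα, hβ, fun n => ?_⟩
  have hnn : ∀ (w : Fin n → {σ // σ ∈ S}), Confined d (fun i => (w i).1) →
      ∀ j, 0 ≤ ∑ i, (w i).1 j := by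
    intro w hc j
    have h := hc n le_rfl j
    rwa [Finset.filter_true_of_mem (fun i _ => i.isLt)] at h
  have key : ∀ (ι : Fin d → ℕ) (w : Fin n → {σ // σ ∈ S}),
      Confined d (fun i => (w i).1) → CWAux.epN S w = ι →
      walkWeight d w' (fun i => (w i).1) = β ^ n * ∏ j, α j ^ (ι j) := by
    intro ι w hc hend
    have hend' : (fun j => ∑ i, (w i).1 j) = fun j => ((ι j : ℕ) : ℤ) := by
      funext j
      rw [← hend, CWAux.epN]
      exact (Int.toNat_of_nonneg (hnn w hc j)).symm
    have hach : (((n : ℤ)), fun j => ((ι j : ℕ) : ℤ)) ∈ CWAux.Ach S := by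
      rw [← hend']
      exact ⟨n, w, hc, rfl, rfl⟩
    rw [← CWAux.F_spec hcentral w hc, hend']
    exact heval n ι hach
  have hq0 : ∀ ι ∉ (Finset.univ.filter (fun w : Fin n → {σ // σ ∈ S} =>
        Confined d (fun i => (w i).1))).image (CWAux.epN S),
      (qpoint d S n ι : ℝ) * ∏ j, α j ^ (ι j) = 0 := by
    intro ι hι
    have hq : qpoint d S n ι = 0 := by
      by_contra hne
      obtain ⟨w, hwmem⟩ := Finset.card_pos.mp (Nat.pos_of_ne_zero hne)
      rw [Finset.mem_filter] at hwmem
      obtain ⟨-, hc, he⟩ := hwmem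
      refine hι (Finset.mem_image.mpr ⟨w, Finset.mem_filter.mpr ⟨Finset.mem_univ _, hc⟩, ?_⟩)
      funext j
      rw [CWAux.epN, he j, Int.toNat_natCast]
    rw [hq]
    simp
  rw [tsum_eq_sum hq0,
    ← Finset.sum_fiberwise_of_maps_to (g := CWAux.epN S)
      (fun w hwm => Finset.mem_image_of_mem (CWAux.epN S) hwm)
      (fun w => walkWeight d w' (fun i => (w i).1)),
    Finset.mul_sum]
  refine Finset.sum_congr rfl fun ι hι => ?_
  have hinner : ∀ w ∈ (Finset.univ.filter (fun w : Fin n → {σ // σ ∈ S} =>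
        Confined d (fun i => (w i).1))).filter (fun w => CWAux.epN S w = ι),
      walkWeight d w' (fun i => (w i).1) = β ^ n * ∏ j, α j ^ (ι j) := by
    intro w hwm
    rw [Finset.mem_filter, Finset.mem_filter] at hwm
    exact key ι w hwm.1.2 hwm.2
  rw [Finset.sum_congr rfl hinner, Finset.sum_const]
  have hcard : ((Finset.univ.filter (fun w : Fin n → {σ // σ ∈ S} =>
      Confined d (fun i => (w i).1))).filter (fun w => CWAux.epN S w = ι)).card
      = qpoint d S n ι := by
    rw [Finset.filter_filter, qpoint]
    congr 1
    apply Finset.filter_congr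
    intro w _
    constructor
    · rintro ⟨hc, rfl⟩
      refine ⟨hc, fun j => ?_⟩
      rw [CWAux.epN]
      exact (Int.toNat_of_nonneg (hnn w hc j)).symm
    · rintro ⟨hc, he⟩
      refine ⟨hc, funext fun j => ?_⟩
      rw [CWAux.epN, he j, Int.toNat_natCast]
  rw [hcard, nsmul_eq_mul]
  ring
end

section
/- Let S ⊆ {−1,0,1}^d be a nontrivial reflectable stepset and α ∈ (ℝ_{>0})^d, and define the polynomial H̃(x,t) := 1 − t·Σ_{σ∈S} (∏_j α_j^{σ_j}) ∏_j x_j^{1−σ_j}, so that H̃(x,t) = 1 − t x_1⋯x_d S(α x^{−1}) when all x_k ≠ 0. For x ∈ (ℂ∖{0})^d and t ∈ ℂ, the critical point system [H̃(x,t) = 0 and, for every k, x_k·∂H̃/∂x_k(x,t) = t·∂H̃/∂t(x,t)] holds if and only if [t·x_1⋯x_d·S(α x^{−1}) = 1 and for every k, (x_k² − α_k²)·P_k(x) = 0], where P_k(x) := Σ_{σ∈S, σ_k=1} ∏_{j≠k} (α_j/x_j)^{σ_j}. In particular every (x,t) with x_k = ±α_k for all k and t·x_1⋯x_d·S(α x^{−1})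 = 1 is a solution; and if moreover all coordinates of x are positive reals, then the system holds if and only if x = α and t·α_1⋯α_d·S(1,…,1) = 1. -/
open scoped BigOperators Classical

def Reflectable (d : ℕ) (S : Finset (Fin d → ℤ)) : Prop :=
  ∀ σ ∈ S, ∀ j, Function.update σ j (-(σ j)) ∈ S

def NontrivialStepset (d : ℕ) (S : Finset (Fin d → ℤ)) : Prop :=
  ∀ j, ∃ σ ∈ S, σ j ≠ 0

/-- The inventory `S(y) = Σ_{σ∈S} y^σ` over `ℂ`. -/
noncomputable def inventoryC (d : ℕ) (S : Finset (Fin d → ℤ)) (y : Fin d → ℂ) : ℂ :=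
  ∑ σ ∈ S, ∏ j, y j ^ (σ j)

/-- The denominator polynomial `H̃(x,t) = 1 − t Σ_{σ∈S} (Π_j α_j^{σ_j}) Π_j x_j^{1−σ_j}`. -/
noncomputable def Htilde (d : ℕ) (S : Finset (Fin d → ℤ)) (α : Fin d → ℝ)
    (x : Fin d → ℂ) (t : ℂ) : ℂ :=
  1 - t * ∑ σ ∈ S, (∏ j, (α j : ℂ) ^ (σ j)) * ∏ j, x j ^ ((1 - σ j).toNat)

/-- `P_k(x) = Σ_{σ∈S, σ_k = 1} Π_{j≠k} (α_j/x_j)^{σ_j}`. -/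
noncomputable def Pk (d : ℕ) (S : Finset (Fin d → ℤ)) (α : Fin d → ℝ)
    (x : Fin d → ℂ) (k : Fin d) : ℂ :=
  ∑ σ ∈ S.filter (fun σ => σ k = 1), ∏ j ∈ Finset.univ.erase k, ((α j : ℂ) / x j) ^ (σ j)

/-- The critical point system for `H̃`: `H̃ = 0` together with
`x_k ∂H̃/∂x_k = t ∂H̃/∂t` for all `k`. -/
def CriticalSystem (d : ℕ) (S : Finset (Fin d → ℤ)) (α : Fin d → ℝ)
    (x : Fin d → ℂ) (t : ℂ) : Prop :=
  Htilde d S α x t = 0 ∧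
    ∀ k, x k * deriv (fun s => Htilde d S α (Function.update x k s) t) (x k) =
      t * deriv (fun s => Htilde d S α x s) t

section Aux

lemma coordL {x a : ℂ} (hx : x ≠ 0) (ha : a ≠ 0) {s : ℤ} (hs : s = -1 ∨ s = 0 ∨ s = 1) :
    a ^ s * x ^ ((1 - s).toNat) = x * (a / x) ^ s := by
  rcases hs with h|h|h <;> subst h
  · have h2 : ((1:ℤ) - (-1)).toNat = 2 := rfl
    rw [h2, zpow_neg_one, zpow_neg_one]
    field_simp
  · simp
  · have h0 : ((1:ℤ) - 1).toNat = 0 := rfl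
    rw [h0, zpow_one, zpow_one]
    field_simp

lemma sumL (d : ℕ) (S : Finset (Fin d → ℤ)) (hstep : IsStepset d S)
    (α : Fin d → ℝ) (hα : ∀ j, 0 < α j) (x : Fin d → ℂ) (hx : ∀ k, x k ≠ 0)
    (w : (Fin d → ℤ) → ℂ) :
    ∑ σ ∈ S, w σ * ((∏ j, (α j : ℂ) ^ (σ j)) * ∏ j, x j ^ ((1 - σ j).toNat))
      = (∏ j, x j) * ∑ σ ∈ S, w σ * ∏ j, ((α j : ℂ) / x j) ^ (σ j) := by
  rw [Finset.mul_sum]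
  refine Finset.sum_congr rfl fun σ hσ => ?_
  rw [← Finset.prod_mul_distrib]
  have h : ∏ j, (α j : ℂ) ^ (σ j) * x j ^ ((1 - σ j).toNat)
      = ∏ j, x j * ((α j : ℂ) / x j) ^ (σ j) := by
    refine Finset.prod_congr rfl fun j _ => ?_
    exact coordL (hx j) (by exact_mod_cast (hα j).ne') (hstep σ hσ j)
  rw [h, Finset.prod_mul_distrib]; ring

lemma derivT (d : ℕ) (S : Finset (Fin d → ℤ)) (α : Fin d → ℝ)
    (x : Fin d → ℂ) (t : ℂ) :
    deriv (fun s => Htilde d S α x s) t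
      = -(∑ σ ∈ S, (∏ j, (α j : ℂ) ^ (σ j)) * ∏ j, x j ^ ((1 - σ j).toNat)) := by
  have h : (fun s => Htilde d S α x s)
      = fun s => 1 - s * ∑ σ ∈ S, (∏ j, (α j : ℂ) ^ (σ j)) * ∏ j, x j ^ ((1 - σ j).toNat) := rfl
  rw [h]
  have := ((hasDerivAt_id t).mul_const
    (∑ σ ∈ S, (∏ j, (α j : ℂ) ^ (σ j)) * ∏ j, x j ^ ((1 - σ j).toNat))).const_sub 1
  simpa using this.deriv

lemma derivX (d : ℕ) (S : Finset (Fin d → ℤ)) (α : Fin d → ℝ)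
    (x : Fin d → ℂ) (t : ℂ) (k : Fin d) :
    deriv (fun s => Htilde d S α (Function.update x k s) t) (x k)
      = -(t * ∑ σ ∈ S, (∏ j, (α j : ℂ) ^ (σ j)) *
          ((((1 - σ k).toNat : ℂ)) * x k ^ ((1 - σ k).toNat - 1) *
            ∏ j ∈ Finset.univ.erase k, x j ^ ((1 - σ j).toNat))) := by
  have hsplit : ∀ s : ℂ, ∀ σ : Fin d → ℤ,
      ∏ j, (Function.update x k s j) ^ ((1 - σ j).toNat)
        = s ^ ((1 - σ k).toNat) * ∏ j ∈ Finset.univ.erase k, x j ^ ((1 - σ j).toNat) := by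
    intro s σ
    rw [← Finset.mul_prod_erase Finset.univ _ (Finset.mem_univ k)]
    rw [Function.update_self]
    congr 1
    refine Finset.prod_congr rfl fun j hj => ?_
    rw [Function.update_of_ne (Finset.mem_erase.1 hj).1]
  have h : (fun s => Htilde d S α (Function.update x k s) t)
      = fun s => 1 - t * ∑ σ ∈ S, (∏ j, (α j : ℂ) ^ (σ j)) *
          (s ^ ((1 - σ k).toNat) * ∏ j ∈ Finset.univ.erase k, x j ^ ((1 - σ j).toNat)) := by
    funext s
    simp only [Htilde, hsplit s]
  rw [h]
  have hd : HasDerivAt (fun s : ℂ => ∑ σ ∈ S, (∏ j, (α j : ℂ) ^ (σ j)) *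
        (s ^ ((1 - σ k).toNat) * ∏ j ∈ Finset.univ.erase k, x j ^ ((1 - σ j).toNat)))
      (∑ σ ∈ S, (∏ j, (α j : ℂ) ^ (σ j)) *
        ((((1 - σ k).toNat : ℂ)) * x k ^ ((1 - σ k).toNat - 1) *
          ∏ j ∈ Finset.univ.erase k, x j ^ ((1 - σ j).toNat))) (x k) := by
    refine HasDerivAt.fun_sum fun σ _ => ?_
    have := ((hasDerivAt_pow ((1 - σ k).toNat) (x k)).mul_const
      (∏ j ∈ Finset.univ.erase k, x j ^ ((1 - σ j).toNat))).const_mul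
      (∏ j, (α j : ℂ) ^ (σ j))
    simpa [mul_assoc] using this
  have := (hd.const_mul t).const_sub (1 : ℂ)
  simpa using this.deriv

end Aux

section Key
variable (d : ℕ) (S : Finset (Fin d → ℤ))

lemma hpowL (n : ℕ) (z : ℂ) : z * ((n : ℂ) * z ^ (n - 1)) = (n : ℂ) * z ^ n := by
  cases n with
  | zero => simp
  | succ m => simp [pow_succ]; ring

lemma castNatC {s : ℤ} (hs : s = -1 ∨ s = 0 ∨ s = 1) :
    (((1 - s).toNat : ℂ)) = 1 - (s : ℂ) := by
  have h : (((1 - s).toNat : ℤ)) = 1 - s := Int.toNat_of_nonneg (by omega)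
  calc (((1 - s).toNat : ℂ)) = ((((1 - s).toNat : ℤ)) : ℂ) := by push_cast; ring
    _ = ((1 - s : ℤ) : ℂ) := by rw [h]
    _ = 1 - (s : ℂ) := by push_cast; ring

lemma keyK (hstep : IsStepset d S) (α : Fin d → ℝ) (hα : ∀ j, 0 < α j)
    (x : Fin d → ℂ) (hx : ∀ k, x k ≠ 0) (t : ℂ) (k : Fin d) :
    (x k * deriv (fun s => Htilde d S α (Function.update x k s) t) (x k) =
      t * deriv (fun s => Htilde d S α x s) t)
    ↔ t * ((∏ j, x j) * ∑ σ ∈ S, (σ k : ℂ) * ∏ j, ((α j : ℂ) / x j) ^ (σ j)) = 0 := by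
  rw [derivX, derivT]
  have hterm : ∀ σ ∈ S, x k * ((∏ j, (α j : ℂ) ^ (σ j)) *
      ((((1 - σ k).toNat : ℂ)) * x k ^ ((1 - σ k).toNat - 1) *
        ∏ j ∈ Finset.univ.erase k, x j ^ ((1 - σ j).toNat)))
      = (1 - (σ k : ℂ)) * ((∏ j, (α j : ℂ) ^ (σ j)) * ∏ j, x j ^ ((1 - σ j).toNat)) := by
    intro σ hσ
    have hF : x k ^ ((1 - σ k).toNat) * ∏ j ∈ Finset.univ.erase k, x j ^ ((1 - σ j).toNat)
        = ∏ j, x j ^ ((1 - σ j).toNat) :=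
      Finset.mul_prod_erase Finset.univ (fun j => x j ^ ((1 - σ j).toNat)) (Finset.mem_univ k)
    calc x k * ((∏ j, (α j : ℂ) ^ (σ j)) *
          ((((1 - σ k).toNat : ℂ)) * x k ^ ((1 - σ k).toNat - 1) *
            ∏ j ∈ Finset.univ.erase k, x j ^ ((1 - σ j).toNat)))
        = (∏ j, (α j : ℂ) ^ (σ j)) *
            ((x k * ((((1 - σ k).toNat : ℂ)) * x k ^ ((1 - σ k).toNat - 1))) *
              ∏ j ∈ Finset.univ.erase k, x j ^ ((1 - σ j).toNat)) := by ring
      _ = (∏ j, (α j : ℂ) ^ (σ j)) *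
            (((((1 - σ k).toNat : ℂ)) * x k ^ ((1 - σ k).toNat)) *
              ∏ j ∈ Finset.univ.erase k, x j ^ ((1 - σ j).toNat)) := by
          rw [hpowL]
      _ = (((1 - σ k).toNat : ℂ)) * ((∏ j, (α j : ℂ) ^ (σ j)) *
            (x k ^ ((1 - σ k).toNat) *
              ∏ j ∈ Finset.univ.erase k, x j ^ ((1 - σ j).toNat))) := by ring
      _ = (1 - (σ k : ℂ)) * ((∏ j, (α j : ℂ) ^ (σ j)) * ∏ j, x j ^ ((1 - σ j).toNat)) := by
          rw [hF, castNatC (hstep σ hσ k)]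
  have hL : x k * -(t * ∑ σ ∈ S, (∏ j, (α j : ℂ) ^ (σ j)) *
      ((((1 - σ k).toNat : ℂ)) * x k ^ ((1 - σ k).toNat - 1) *
        ∏ j ∈ Finset.univ.erase k, x j ^ ((1 - σ j).toNat)))
      = -(t * ∑ σ ∈ S, (1 - (σ k : ℂ)) *
          ((∏ j, (α j : ℂ) ^ (σ j)) * ∏ j, x j ^ ((1 - σ j).toNat))) := by
    have : x k * -(t * ∑ σ ∈ S, (∏ j, (α j : ℂ) ^ (σ j)) *
        ((((1 - σ k).toNat : ℂ)) * x k ^ ((1 - σ k).toNat - 1) *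
          ∏ j ∈ Finset.univ.erase k, x j ^ ((1 - σ j).toNat)))
        = -(t * (x k * ∑ σ ∈ S, (∏ j, (α j : ℂ) ^ (σ j)) *
          ((((1 - σ k).toNat : ℂ)) * x k ^ ((1 - σ k).toNat - 1) *
            ∏ j ∈ Finset.univ.erase k, x j ^ ((1 - σ j).toNat)))) := by ring
    rw [this, Finset.mul_sum, Finset.sum_congr rfl hterm]
  rw [hL, mul_neg t, neg_inj, ← sub_eq_zero, ← mul_sub]
  have hsub : (∑ σ ∈ S, (1 - (σ k : ℂ)) *
        ((∏ j, (α j : ℂ) ^ (σ j)) * ∏ j, x j ^ ((1 - σ j).toNat)))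
      - (∑ σ ∈ S, (∏ j, (α j : ℂ) ^ (σ j)) * ∏ j, x j ^ ((1 - σ j).toNat))
      = -((∏ j, x j) * ∑ σ ∈ S, (σ k : ℂ) * ∏ j, ((α j : ℂ) / x j) ^ (σ j)) := by
    rw [← Finset.sum_sub_distrib]
    have h1 : ∀ σ ∈ S, (1 - (σ k : ℂ)) *
          ((∏ j, (α j : ℂ) ^ (σ j)) * ∏ j, x j ^ ((1 - σ j).toNat))
        - (∏ j, (α j : ℂ) ^ (σ j)) * ∏ j, x j ^ ((1 - σ j).toNat)
        = (-(σ k : ℂ)) * ((∏ j, (α j : ℂ) ^ (σ j)) * ∏ j, x j ^ ((1 - σ j).toNat)) :=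
      fun σ _ => by ring
    rw [Finset.sum_congr rfl h1, sumL d S hstep α hα x hx (fun σ => -(σ k : ℂ))]
    simp [neg_mul, Finset.sum_neg_distrib]
  rw [hsub, mul_neg, neg_eq_zero]

end Key

section Refl
variable (d : ℕ) (S : Finset (Fin d → ℤ))

lemma Qrefl (hstep : IsStepset d S) (hrefl : Reflectable d S)
    (α : Fin d → ℝ) (x : Fin d → ℂ) (k : Fin d) :
    ∑ σ ∈ S, (σ k : ℂ) * ∏ j, ((α j : ℂ) / x j) ^ (σ j)
      = ((α k : ℂ) / x k - ((α k : ℂ) / x k)⁻¹) * Pk d S α x k := by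
  set y : Fin d → ℂ := fun j => (α j : ℂ) / x j with hy
  have hT : ∀ σ : Fin d → ℤ, ∏ j, y j ^ (σ j)
      = y k ^ (σ k) * ∏ j ∈ Finset.univ.erase k, y j ^ (σ j) :=
    fun σ => (Finset.mul_prod_erase Finset.univ (fun j => y j ^ (σ j)) (Finset.mem_univ k)).symm
  have hsplit : ∀ σ ∈ S, (σ k : ℂ) * ∏ j, y j ^ (σ j)
      = ((if σ k = 1 then y k * ∏ j ∈ Finset.univ.erase k, y j ^ (σ j) else 0)
        + (if σ k = -1 then -((y k)⁻¹ * ∏ j ∈ Finset.univ.erase k, y j ^ (σ j)) else 0)) := by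
    intro σ hσ
    rcases hstep σ hσ k with h|h|h <;> rw [hT σ] <;> simp [h]
  rw [Finset.sum_congr rfl hsplit, Finset.sum_add_distrib, ← Finset.sum_filter,
    ← Finset.sum_filter]
  have hbij : ∑ σ ∈ S.filter (fun σ => σ k = -1),
        ∏ j ∈ Finset.univ.erase k, y j ^ (σ j)
      = ∑ σ ∈ S.filter (fun σ => σ k = 1), ∏ j ∈ Finset.univ.erase k, y j ^ (σ j) := by
    refine Finset.sum_nbij' (fun σ => Function.update σ k 1)
      (fun σ => Function.update σ k (-1)) ?_ ?_ ?_ ?_ ?_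
    · intro σ hσ
      rcases Finset.mem_filter.1 hσ with ⟨hσS, hσk⟩
      refine Finset.mem_filter.2 ⟨?_, by simp⟩
      have := hrefl σ hσS k
      rwa [hσk] at this
    · intro σ hσ
      rcases Finset.mem_filter.1 hσ with ⟨hσS, hσk⟩
      refine Finset.mem_filter.2 ⟨?_, by simp⟩
      have := hrefl σ hσS k
      rw [hσk] at this
      simpa using this
    · intro σ hσ
      rcases Finset.mem_filter.1 hσ with ⟨hσS, hσk⟩
      simp only [Function.update_idem]
      rw [← hσk, Function.update_eq_self]
    · intro σ hσ
      rcases Finset.mem_filter.1 hσ with ⟨hσS, hσk⟩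
      simp only [Function.update_idem]
      rw [← hσk, Function.update_eq_self]
    · intro σ hσ
      refine Finset.prod_congr rfl fun j hj => ?_
      simp [Function.update_of_ne (Finset.mem_erase.1 hj).1]
  rw [← Finset.mul_sum, Finset.sum_neg_distrib, ← Finset.mul_sum, hbij]
  show y k * Pk d S α x k + -((y k)⁻¹ * Pk d S α x k) = _
  ring

end Refl

theorem critical_points_of_reflectable_model
    (d : ℕ) (hd : 1 ≤ d) (S : Finset (Fin d → ℤ))
    (hstep : IsStepset d S) (hrefl : Reflectable d S) (hnt : NontrivialStepset d S)
    (α : Fin d → ℝ) (hα : ∀ j, 0 < α j) :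
    -- the system is equivalent to the explicit form
    (∀ (x : Fin d → ℂ) (t : ℂ), (∀ k, x k ≠ 0) →
      (CriticalSystem d S α x t ↔
        (t * (∏ k, x k) * inventoryC d S (fun j => (α j : ℂ) / x j) = 1 ∧
          ∀ k, ((x k) ^ 2 - (α k : ℂ) ^ 2) * Pk d S α x k = 0))) ∧
    -- every point with `x_k = ±α_k` and the normalization on `t` is a solution
    (∀ (x : Fin d → ℂ) (t : ℂ),
      (∀ k, x k = (α k : ℂ) ∨ x k = -(α k : ℂ)) →
      t * (∏ k, x k) * inventoryC d S (fun j => (α j : ℂ) / x j) = 1 →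
      CriticalSystem d S α x t) ∧
    -- among points with all coordinates positive reals, the only solution is `x = α`
    (∀ (x : Fin d → ℂ) (t : ℂ),
      (∀ k, ∃ ρ : ℝ, 0 < ρ ∧ x k = (ρ : ℂ)) →
      (CriticalSystem d S α x t ↔
        ((∀ k, x k = (α k : ℂ)) ∧
          t * (∏ k, (α k : ℂ)) * (S.card : ℂ) = 1))) := by
  have hαC : ∀ k, (α k : ℂ) ≠ 0 := fun k => by exact_mod_cast (hα k).ne'
  -- Part 1
  have main : ∀ (x : Fin d → ℂ) (t : ℂ), (∀ k, x k ≠ 0) →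
      (CriticalSystem d S α x t ↔
        (t * (∏ k, x k) * inventoryC d S (fun j => (α j : ℂ) / x j) = 1 ∧
          ∀ k, ((x k) ^ 2 - (α k : ℂ) ^ 2) * Pk d S α x k = 0)) := by
    intro x t hx
    have hsum : ∑ σ ∈ S, (∏ j, (α j : ℂ) ^ (σ j)) * ∏ j, x j ^ ((1 - σ j).toNat)
        = (∏ j, x j) * inventoryC d S (fun j => (α j : ℂ) / x j) := by
      have := sumL d S hstep α hα x hx (fun _ => 1)
      simpa [inventoryC] using this
    have hH : Htilde d S α x t
        = 1 - t * ((∏ j, x j) * inventoryC d S (fun j => (α j : ℂ) / x j)) := by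
      rw [Htilde, hsum]
    unfold CriticalSystem
    have hfirst : (Htilde d S α x t = 0)
        ↔ t * (∏ k, x k) * inventoryC d S (fun j => (α j : ℂ) / x j) = 1 := by
      rw [hH, sub_eq_zero, mul_assoc]
      exact eq_comm
    rw [hfirst]
    refine and_congr_right fun hE1 => forall_congr' fun k => ?_
    rw [keyK d S hstep α hα x hx t k, Qrefl d S hstep hrefl α x k]
    have ht : t ≠ 0 := fun h => by simp [h] at hE1
    have hprod : (∏ j, x j) ≠ 0 := Finset.prod_ne_zero_iff.2 fun j _ => hx j
    have hkey : ∀ z : ℂ, (-(x k * (α k : ℂ))) *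
        (((α k : ℂ) / x k - ((α k : ℂ) / x k)⁻¹) * z)
        = ((x k) ^ 2 - (α k : ℂ) ^ 2) * z := by
      intro z
      rw [inv_div]
      field_simp [hx k, hαC k]
      ring
    constructor
    · intro h
      have h2 : ((α k : ℂ) / x k - ((α k : ℂ) / x k)⁻¹) * Pk d S α x k = 0 := by
        rcases mul_eq_zero.1 h with h'|h'
        · exact absurd h' ht
        rcases mul_eq_zero.1 h' with h''|h''
        · exact absurd h'' hprod
        · exact h''
      rw [← hkey, h2, mul_zero]
    · intro h
      rw [← hkey] at h
      rcases mul_eq_zero.1 h with h'|h'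
      · exact absurd h' (by simp [hx k, hαC k])
      · rw [h', mul_zero, mul_zero]
  refine ⟨main, ?_, ?_⟩
  -- Part 2
  · intro x t hpm hE1
    have hx : ∀ k, x k ≠ 0 := fun k => by
      rcases hpm k with h|h <;> rw [h] <;> simp [hαC k]
    refine (main x t hx).2 ⟨hE1, fun k => ?_⟩
    rcases hpm k with h|h <;> rw [h] <;> ring_nf
  -- Part 3
  · intro x t hpos
    choose ρ hρpos hρ using hpos
    have hx : ∀ k, x k ≠ 0 := fun k => by
      rw [hρ k]; exact_mod_cast (hρpos k).ne'
    rw [main x t hx]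
    have hfilter : ∀ k, (S.filter (fun σ => σ k = 1)).Nonempty := by
      intro k
      obtain ⟨σ, hσS, hσk⟩ := hnt k
      rcases hstep σ hσS k with h|h|h
      · refine ⟨Function.update σ k 1, Finset.mem_filter.2 ⟨?_, by simp⟩⟩
        have := hrefl σ hσS k
        rwa [h] at this
      · exact absurd h hσk
      · exact ⟨σ, Finset.mem_filter.2 ⟨hσS, h⟩⟩
    have hPk : ∀ k, Pk d S α x k ≠ 0 := by
      intro k
      have hcast : Pk d S α x k = ((∑ σ ∈ S.filter (fun σ => σ k = 1),
          ∏ j ∈ Finset.univ.erase k, (α j / ρ j) ^ (σ j) : ℝ) : ℂ) := by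
        unfold Pk
        push_cast
        refine Finset.sum_congr rfl fun σ _ => Finset.prod_congr rfl fun j _ => ?_
        rw [hρ j]
      have hpos' : 0 < ∑ σ ∈ S.filter (fun σ => σ k = 1),
          ∏ j ∈ Finset.univ.erase k, (α j / ρ j) ^ (σ j) := by
        refine Finset.sum_pos (fun σ _ => Finset.prod_pos fun j _ => ?_) (hfilter k)
        exact zpow_pos (div_pos (hα j) (hρpos j)) _
      rw [hcast]
      exact_mod_cast hpos'.ne'
    have hinv : (∀ k, x k = (α k : ℂ)) →
        inventoryC d S (fun j => (α j : ℂ) / x j) = (S.card : ℂ) := by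
      intro hxα
      have h1 : ∀ j, (α j : ℂ) / x j = 1 := fun j => by
        rw [hxα j]; exact div_self (hαC j)
      simp [inventoryC, h1]
    constructor
    · rintro ⟨hE1, hcond⟩
      have hxα : ∀ k, x k = (α k : ℂ) := by
        intro k
        rcases mul_eq_zero.1 (hcond k) with h|h
        · have h2 : (ρ k : ℂ) ^ 2 = ((α k : ℂ)) ^ 2 := by
            rw [← hρ k]; linear_combination h
          have hr : (ρ k) ^ 2 = (α k) ^ 2 := by exact_mod_cast h2
          have : ρ k = α k := by nlinarith [hρpos k, hα k]
          rw [hρ k, this]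
        · exact absurd h (hPk k)
      refine ⟨hxα, ?_⟩
      rw [Finset.prod_congr rfl fun k _ => hxα k, hinv hxα] at hE1
      exact hE1
    · rintro ⟨hxα, hE1⟩
      refine ⟨?_, fun k => ?_⟩
      · rw [Finset.prod_congr rfl fun k _ => hxα k, hinv hxα]
        exact hE1
      · rw [hxα k]
        ring_nf
end

section
/- Let S ⊆ {−1,0,1}^d be a nontrivial reflectable stepset and α ∈ (ℝ_{>0})^d. Define H(x,t) := (1 − t·Σ_{σ∈S} (∏_j α_j^{σ_j}) ∏_j x_j^{1−σ_j}) · ∏_{k=1}^d (1 − x_k), α_k⁻ := min(α_k,1), α_k⁺ := max(α_k,1), and t_{α⁻} := 1/(α_1⁻⋯α_d⁻ · S(α⁺)). Then H(α_1⁻,…,α_d⁻, t_{α⁻}) = 0, while H(x,t) ≠ 0 for every (x,t) ∈ ℂ^{d+1} with |x_k| < α_k⁻ for all k and |t| < t_{α⁻}; that is, (α⁻, t_{α⁻}) is a minimal zero of the denominator H. -/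
open scoped BigOperators Classical

/-- The real inventory `S(x) = Σ_{σ∈S} x^σ`. -/
noncomputable def inventory (d : ℕ) (S : Finset (Fin d → ℤ)) (x : Fin d → ℝ) : ℝ :=
  ∑ σ ∈ S, ∏ j, x j ^ (σ j)

/-- The full denominator
`H(x,t) = (1 − t Σ_{σ∈S} (Π_j α_j^{σ_j}) Π_j x_j^{1−σ_j}) · Π_k (1 − x_k)` over `ℂ`. -/
noncomputable def Hden (d : ℕ) (S : Finset (Fin d → ℤ)) (α : Fin d → ℝ)
    (x : Fin d → ℂ) (t : ℂ) : ℂ :=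
  (1 - t * ∑ σ ∈ S, (∏ j, (α j : ℂ) ^ (σ j)) * ∏ j, x j ^ ((1 - σ j).toNat)) *
    ∏ k, (1 - x k)

lemma coord_key (x m M : ℝ) (hm : 0 < m) (hM : 0 < M) (hx : x = m * M)
    (s : ℤ) (hs : s = -1 ∨ s = 0 ∨ s = 1) :
    x ^ s * m ^ ((1 - s).toNat) = m * M ^ s := by
  have hm' := hm.ne'
  have hM' := hM.ne'
  have h2 : ((1:ℤ) - (-1)).toNat = 2 := rfl
  have h1 : ((1:ℤ) - 0).toNat = 1 := rfl
  have h0 : ((1:ℤ) - 1).toNat = 0 := rfl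
  rcases hs with h | h | h <;> subst h <;> subst hx <;>
    simp only [h2, h1, h0, zpow_neg, zpow_one, zpow_zero, pow_one, pow_zero, mul_one, one_mul] <;>
    field_simp <;> ring

/-- `(α⁻, t_{α⁻})` is a minimal zero of the denominator `H`. -/
theorem minimal_critical_point
    (d : ℕ) (hd : 1 ≤ d) (S : Finset (Fin d → ℤ))
    (hstep : IsStepset d S) (hrefl : Reflectable d S) (hnt : NontrivialStepset d S)
    (α : Fin d → ℝ) (hα : ∀ j, 0 < α j)
    (αminus αplus : Fin d → ℝ) (tminus : ℝ)
    (hαminus : ∀ k, αminus k = min (α k) 1)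
    (hαplus : ∀ k, αplus k = max (α k) 1)
    (htminus : tminus = 1 / ((∏ k, αminus k) * inventory d S αplus)) :
    Hden d S α (fun k => (αminus k : ℂ)) (tminus : ℂ) = 0 ∧
    ∀ (x : Fin d → ℂ) (t : ℂ),
      (∀ k, ‖x k‖ < αminus k) → ‖t‖ < tminus →
      Hden d S α x t ≠ 0 := by
  have ha : ∀ k, 0 < αminus k := fun k => by
    rw [hαminus]; exact lt_min (hα k) one_pos
  have ha1 : ∀ k, αminus k ≤ 1 := fun k => by rw [hαminus]; exact min_le_right _ _
  have hb : ∀ k, 0 < αplus k := fun k => by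
    rw [hαplus]; exact lt_of_lt_of_le one_pos (le_max_right _ _)
  have hab : ∀ k, α k = αminus k * αplus k := fun k => by
    rw [hαminus, hαplus, min_mul_max, mul_one]
  -- nonemptiness of S
  obtain ⟨σ₀, hσ₀, -⟩ := hnt ⟨0, hd⟩
  have hSne : S.Nonempty := ⟨σ₀, hσ₀⟩
  -- positivity of inventory
  have hinv : 0 < inventory d S αplus := by
    apply Finset.sum_pos (fun σ _ => Finset.prod_pos fun j _ => zpow_pos (hb j) _) hSne
  have hpa : 0 < ∏ k, αminus k := Finset.prod_pos fun k _ => ha k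
  set B : ℝ := (∏ k, αminus k) * inventory d S αplus with hB
  have hBpos : 0 < B := mul_pos hpa hinv
  have htpos : 0 < tminus := by rw [htminus]; positivity
  -- key identity (real)
  have key : ∀ σ ∈ S,
      (∏ j, (α j) ^ (σ j)) * ∏ j, (αminus j) ^ ((1 - σ j).toNat)
        = (∏ k, αminus k) * ∏ j, (αplus j) ^ (σ j) := by
    intro σ hσ
    rw [← Finset.prod_mul_distrib, ← Finset.prod_mul_distrib]
    exact Finset.prod_congr rfl fun j _ =>
      coord_key (α j) (αminus j) (αplus j) (ha j) (hb j) (hab j) (σ j) (hstep σ hσ j)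
  have keysum : (∑ σ ∈ S, (∏ j, (α j) ^ (σ j)) * ∏ j, (αminus j) ^ ((1 - σ j).toNat)) = B := by
    rw [hB, inventory, Finset.mul_sum]
    exact Finset.sum_congr rfl key
  constructor
  · -- H(α⁻, t⁻) = 0
    have hsum : (∑ σ ∈ S, (∏ j, (α j : ℂ) ^ (σ j)) *
        ∏ j, ((αminus j : ℂ)) ^ ((1 - σ j).toNat)) = (B : ℂ) := by
      rw [← keysum]
      push_cast
      rfl
    unfold Hden
    rw [hsum]
    have hBne : (B : ℂ) ≠ 0 := by exact_mod_cast hBpos.ne'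
    have : (tminus : ℂ) * (B : ℂ) = 1 := by
      rw [htminus]
      push_cast
      field_simp
    rw [this]
    simp
  · intro x t hx ht
    unfold Hden
    apply mul_ne_zero
    · -- first factor
      have hbound : ‖t * ∑ σ ∈ S, (∏ j, (α j : ℂ) ^ (σ j)) *
          ∏ j, x j ^ ((1 - σ j).toNat)‖ < 1 := by
        rw [norm_mul]
        have h1 : ‖∑ σ ∈ S, (∏ j, (α j : ℂ) ^ (σ j)) *
            ∏ j, x j ^ ((1 - σ j).toNat)‖ ≤ B := by
          refine le_trans (norm_sum_le _ _) ?_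
          rw [← keysum]
          apply Finset.sum_le_sum
          intro σ hσ
          rw [norm_mul, norm_prod, norm_prod]
          apply mul_le_mul
          · apply le_of_eq
            apply Finset.prod_congr rfl
            intro j _
            rw [norm_zpow, Complex.norm_real, Real.norm_eq_abs, abs_of_pos (hα j)]
          · apply Finset.prod_le_prod (fun j _ => by positivity)
            intro j _
            rw [norm_pow]
            exact pow_le_pow_left₀ (norm_nonneg _) (hx j).le _
          · exact Finset.prod_nonneg fun j _ => norm_nonneg _
          · exact Finset.prod_nonneg fun j _ => (zpow_pos (hα j) _).le
        calc ‖t‖ * ‖∑ σ ∈ S, (∏ j, (α j : ℂ) ^ (σ j)) *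
              ∏ j, x j ^ ((1 - σ j).toNat)‖
            ≤ ‖t‖ * B := by
              exact mul_le_mul_of_nonneg_left h1 (norm_nonneg _)
          _ < tminus * B := by exact mul_lt_mul_of_pos_right ht hBpos
          _ = 1 := by rw [htminus]; field_simp [hBpos.ne']
      intro hzero
      have : t * (∑ σ ∈ S, (∏ j, (α j : ℂ) ^ (σ j)) * ∏ j, x j ^ ((1 - σ j).toNat)) = 1 := by
        linear_combination -hzero
      rw [this] at hbound
      simp at hbound
    · -- second factor
      apply Finset.prod_ne_zero_iff.mpr
      intro k _
      intro hzero
      have hxk : x k = 1 := by linear_combination -hzero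
      have := hx k
      rw [hxk] at this
      simp at this
      exact absurd (lt_of_lt_of_le this (ha1 k)) (lt_irrefl 1)
end

section
/- Let S ⊆ {−1,0,1}^d be a nontrivial reflectable stepset and α ∈ (ℝ_{>0})^d. Then q_α(n) > 0 for all n and lim_{n→∞} q_α(n)^{1/n} = S(α⁺); that is, the exponential growth rate of the weighted counts equals the inventory evaluated at α⁺. -/
open scoped BigOperators Classical

noncomputable def qcount (d : ℕ) (S : Finset (Fin d → ℤ)) (α : Fin d → ℝ) (n : ℕ) : ℝ :=
  ∑ w ∈ Finset.univ.filter
      (fun w : Fin n → {σ // σ ∈ S} => Confined d (fun i => (w i).1)),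
    ∏ j, α j ^ (∑ i, (w i).1 j)

open Finset

namespace EGR

def val (b : Bool) : ℤ := if b then 1 else -1

lemma val_not (b : Bool) : val (!b) = - val b := by cases b <;> simp [val]

def psum {m : ℕ} (η : Fin m → Bool) (c : ℕ) : ℤ :=
  ∑ k ∈ univ.filter (fun k : Fin m => (k : ℕ) < c), val (η k)

def Ssum {m : ℕ} (η : Fin m → Bool) : ℤ := ∑ k, val (η k)

def Good (γ : ℝ) (s : ℤ) : Prop := 0 ≤ s ∧ (γ = 1 → s ≤ 1)

lemma psum_zero {m : ℕ} (η : Fin m → Bool) : psum η 0 = 0 := by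
  simp [psum]

lemma psum_succ {m : ℕ} (η : Fin m → Bool) (c : ℕ) (hc : c < m) :
    psum η (c + 1) = psum η c + val (η ⟨c, hc⟩) := by
  classical
  have h : (univ.filter (fun k : Fin m => (k : ℕ) < c + 1))
      = insert ⟨c, hc⟩ (univ.filter (fun k : Fin m => (k : ℕ) < c)) := by
    ext k
    simp only [mem_filter, mem_univ, true_and, mem_insert]
    constructor
    · intro h
      rcases Nat.lt_succ_iff_lt_or_eq.mp h with h | h
      · exact Or.inr h
      · exact Or.inl (Fin.ext h)
    · rintro (rfl | h)
      · exact Nat.lt_succ_self c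
      · exact h.trans (Nat.lt_succ_self c)
  rw [psum, h, sum_insert (by simp), psum]
  ring

lemma psum_of_le {m : ℕ} (η : Fin m → Bool) (c : ℕ) (hc : m ≤ c) :
    psum η c = Ssum η := by
  rw [psum, Ssum]
  congr 1
  ext k
  simp only [mem_filter, mem_univ, true_and]
  exact iff_of_true (lt_of_lt_of_le k.isLt hc) trivial

def rot {m : ℕ} (t : ℕ) (η : Fin m → Bool) : Fin m → Bool :=
  fun k => η ⟨(k + t) % m, Nat.mod_lt _ (Nat.pos_of_ne_zero (by
    intro h; exact absurd k.isLt (by omega)))⟩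

lemma rot_apply {m : ℕ} (t : ℕ) (η : Fin m → Bool) (k : Fin m) {x : ℕ} (hx : x < m)
    (hxe : ((k : ℕ) + t) % m = x) : rot t η k = η ⟨x, hx⟩ := by
  subst hxe; rfl

lemma rot_key_arith (m a b : ℕ) (ha : a < m) : ((a + (m - b % m)) % m + b) % m = a := by
  have hm : 0 < m := by omega
  have hb : b % m + m * (b / m) = b := Nat.mod_add_div b m
  have hbm : b % m < m := Nat.mod_lt _ hm
  rw [Nat.mod_add_mod]
  have h2 : m * (1 + b / m) = m + m * (b / m) := by ring
  have h1 : a + (m - b % m) + b = a + m * (1 + b / m) := by omega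
  rw [h1, Nat.add_mul_mod_self_left, Nat.mod_eq_of_lt ha]

lemma rot_key_arith2 (m a b : ℕ) (ha : a < m) : ((a + b) % m + (m - b % m)) % m = a := by
  have hm : 0 < m := by omega
  have hb : b % m + m * (b / m) = b := Nat.mod_add_div b m
  have hbm : b % m < m := Nat.mod_lt _ hm
  rw [Nat.mod_add_mod]
  have h2 : m * (1 + b / m) = m + m * (b / m) := by ring
  have h1 : a + b + (m - b % m) = a + m * (1 + b / m) := by omega
  rw [h1, Nat.add_mul_mod_self_left, Nat.mod_eq_of_lt ha]

lemma rot_rot_inv {m : ℕ} (t : ℕ) (η : Fin m → Bool) :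
    rot (m - t % m) (rot t η) = η := by
  funext k
  have hm : 0 < m := Nat.pos_of_ne_zero (by intro h; exact absurd k.isLt (by omega))
  rw [rot_apply (m - t % m) (rot t η) k (x := ((k : ℕ) + (m - t % m)) % m)
    (Nat.mod_lt _ hm) rfl]
  rw [rot_apply t η _ (x := (k : ℕ)) k.isLt (rot_key_arith m k t k.isLt)]

lemma rot_mod {m : ℕ} (t : ℕ) (η : Fin m → Bool) : rot (t % m) η = rot t η := by
  funext k
  have hm : 0 < m := Nat.pos_of_ne_zero (by intro h; exact absurd k.isLt (by omega))
  rw [rot_apply (t % m) η k (x := ((k : ℕ) + t) % m) (Nat.mod_lt _ hm) (Nat.add_mod_mod _ _ _)]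
  rfl

lemma Ssum_rot {m : ℕ} (t : ℕ) (η : Fin m → Bool) : Ssum (rot t η) = Ssum η := by
  classical
  rcases Nat.eq_zero_or_pos m with rfl | hm
  · simp [Ssum]
  · unfold Ssum
    refine Finset.sum_nbij' (i := fun k => (⟨((k : ℕ) + t) % m, Nat.mod_lt _ hm⟩ : Fin m))
      (j := fun k => (⟨((k : ℕ) + (m - t % m)) % m, Nat.mod_lt _ hm⟩ : Fin m)) ?_ ?_ ?_ ?_ ?_
    · intro a _; exact mem_univ _
    · intro a _; exact mem_univ _
    · intro a _
      exact Fin.ext (rot_key_arith2 m a t a.isLt)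
    · intro a _
      exact Fin.ext (rot_key_arith m a t a.isLt)
    · intro a _
      exact congrArg val (rot_apply t η a (Nat.mod_lt _ hm) rfl)

lemma psum_rot {m : ℕ} (η : Fin m → Bool) (t : ℕ) (ht : t < m) :
    ∀ c, c ≤ m → psum (rot t η) c =
      if t + c ≤ m then psum η (t + c) - psum η t
      else Ssum η - psum η t + psum η (t + c - m) := by
  intro c
  induction c with
  | zero =>
    intro _
    simp only [Nat.add_zero, psum_zero]
    rw [if_pos (le_of_lt ht)]
    ring
  | succ c ih =>
    intro hc1
    have hc : c ≤ m := by omega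
    have hcm : c < m := by omega
    rw [psum_succ _ c hcm, ih hc]
    by_cases h1 : t + (c + 1) ≤ m
    · have h2 : t + c ≤ m := by omega
      have hlt : t + c < m := by omega
      rw [if_pos h2, if_pos h1]
      rw [rot_apply t η _ (x := t + c) hlt
        (by show (c + t) % m = t + c
            have := Nat.mod_eq_of_lt (show c + t < m by omega); omega)]
      rw [show t + (c + 1) = (t + c) + 1 from rfl, psum_succ η (t + c) hlt]
      ring
    · by_cases h2 : t + c ≤ m
      · have hm' : t + c = m := by omega
        have hm0 : 0 < m := by omega
        rw [if_pos h2, if_neg h1]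
        rw [rot_apply t η _ (x := 0) hm0
          (by show (c + t) % m = 0; rw [(show c + t = m by omega), Nat.mod_self])]
        have hpm : psum η (t + c) = Ssum η := by rw [hm']; exact psum_of_le η m le_rfl
        have hp1 : psum η (t + (c + 1) - m) = psum η 0 + val (η ⟨0, hm0⟩) := by
          rw [(show t + (c + 1) - m = 0 + 1 by omega)]
          exact psum_succ η 0 hm0
        rw [hpm, hp1, psum_zero]
        ring
      · have hlt : t + c - m < m := by omega
        rw [if_neg h2, if_neg h1]
        rw [rot_apply t η _ (x := t + c - m) hlt
          (by show (c + t) % m = t + c - m; rw [(show c + t = (t + c - m) + m by omega), Nat.add_mod_right]; exact Nat.mod_eq_of_lt hlt)]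
        rw [(show t + (c + 1) - m = (t + c - m) + 1 by omega), psum_succ η (t + c - m) hlt]
        ring

lemma exists_good_rot {m : ℕ} (hm : 0 < m) (η : Fin m → Bool) (h : 0 ≤ Ssum η) :
    ∃ t < m, (∀ c, 0 ≤ psum (rot t η) c) ∧ Ssum (rot t η) = Ssum η := by
  obtain ⟨r, hrmem, hrmin⟩ := (Finset.range m).exists_min_image (fun t => psum η t)
    ⟨0, Finset.mem_range.mpr hm⟩
  rw [Finset.mem_range] at hrmem
  have hr0 : psum η r ≤ 0 := by
    have := hrmin 0 (Finset.mem_range.mpr hm)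
    rwa [psum_zero] at this
  refine ⟨r, hrmem, ?_, Ssum_rot r η⟩
  intro c
  by_cases hc : c ≤ m
  · rw [psum_rot η r hrmem c hc]
    by_cases h1 : r + c ≤ m
    · rw [if_pos h1]
      by_cases h2 : r + c = m
      · have h3 : psum η (r + c) = Ssum η := by rw [h2]; exact psum_of_le η m le_rfl
        rw [h3]; omega
      · have := hrmin (r + c) (Finset.mem_range.mpr (by omega))
        omega
    · rw [if_neg h1]
      have := hrmin (r + c - m) (Finset.mem_range.mpr (by omega))
      omega
  · have h1 : psum (rot r η) c = Ssum η := by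
      rw [psum_of_le _ c (by omega), Ssum_rot]
    omega


lemma zpow_nonneg' {γ : ℝ} (hγ0 : 0 < γ) (s : ℤ) : (0:ℝ) ≤ γ ^ s :=
  le_of_lt (zpow_pos hγ0 s)

lemma sumNN_ge {m n : ℕ} (hmn : m ≤ n) {γ : ℝ} (hγ0 : 0 < γ) :
    ∑ η ∈ univ.filter (fun η : Fin m → Bool => Good γ (Ssum η)), γ ^ Ssum η
    ≤ (n + 1 : ℝ) * ∑ η ∈ univ.filter
        (fun η : Fin m → Bool => (∀ c, 0 ≤ psum η c) ∧ Good γ (Ssum η)), γ ^ Ssum η := by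
  classical
  rcases Nat.eq_zero_or_pos m with rfl | hm
  · have hfe : (univ.filter (fun η : Fin 0 → Bool => (∀ c, 0 ≤ psum η c) ∧ Good γ (Ssum η)))
        = univ.filter (fun η : Fin 0 → Bool => Good γ (Ssum η)) := by
      apply filter_congr
      intro η _
      have hNN : ∀ c, 0 ≤ psum η c := by
        intro c
        simp [psum]
      simp [hNN]
    rw [hfe]
    have h0 : (0:ℝ) ≤ ∑ η ∈ univ.filter (fun η : Fin 0 → Bool => Good γ (Ssum η)), γ ^ Ssum η :=
      Finset.sum_nonneg fun η _ => zpow_nonneg' hγ0 _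
    nlinarith
  · set s := univ.filter (fun η : Fin m → Bool => Good γ (Ssum η)) with hs
    set tt := univ.filter
      (fun η : Fin m → Bool => (∀ c, 0 ≤ psum η c) ∧ Good γ (Ssum η)) with htt
    have hΦex : ∀ η : Fin m → Bool, Good γ (Ssum η) →
        ∃ t < m, (∀ c, 0 ≤ psum (rot t η) c) ∧ Ssum (rot t η) = Ssum η :=
      fun η h => exists_good_rot hm η h.1
    set Φ : (Fin m → Bool) → (Fin m → Bool) := fun η =>
      if h : Good γ (Ssum η) then rot (hΦex η h).choose η else η with hΦ
    have hΦS : ∀ η, Ssum (Φ η) = Ssum η := by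
      intro η
      by_cases h : Good γ (Ssum η)
      · simp only [hΦ, dif_pos h]
        exact Ssum_rot _ _
      · simp only [hΦ, dif_neg h]
    have hΦmem : ∀ η ∈ s, Φ η ∈ tt := by
      intro η hη
      rw [hs, mem_filter] at hη
      obtain ⟨-, hg⟩ := hη
      rw [htt, mem_filter]
      refine ⟨mem_univ _, ?_, ?_⟩
      · simp only [hΦ, dif_pos hg]
        exact (hΦex η hg).choose_spec.2.1
      · rw [hΦS]; exact hg
    have hfiber : ∀ v, (s.filter (fun η => Φ η = v)).card ≤ m := by
      intro v
      have hsub : s.filter (fun η => Φ η = v) ⊆ (range m).image (fun u => rot u v) := by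
        intro η hη
        rw [mem_filter] at hη
        obtain ⟨hηs, hΦv⟩ := hη
        rw [hs, mem_filter] at hηs
        obtain ⟨-, hg⟩ := hηs
        set t := (hΦex η hg).choose with htdef
        have ht : t < m := (hΦex η hg).choose_spec.1
        have hv : v = rot t η := by rw [← hΦv]; simp only [hΦ, dif_pos hg]; rfl
        rw [mem_image]
        refine ⟨(m - t % m) % m, mem_range.mpr (Nat.mod_lt _ hm), ?_⟩
        rw [hv, rot_mod, rot_rot_inv]
      calc (s.filter (fun η => Φ η = v)).card ≤ ((range m).image (fun u => rot u v)).card :=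
            card_le_card hsub
        _ ≤ (range m).card := card_image_le
        _ = m := card_range m
    calc ∑ η ∈ s, γ ^ Ssum η = ∑ η ∈ s, γ ^ Ssum (Φ η) := by
          exact Finset.sum_congr rfl fun η _ => by rw [hΦS]
      _ = ∑ v ∈ s.image Φ, (s.filter (fun η => Φ η = v)).card • γ ^ Ssum v :=
          Finset.sum_comp (fun v => γ ^ Ssum v) Φ
      _ ≤ ∑ v ∈ s.image Φ, (n + 1 : ℝ) * γ ^ Ssum v := by
          apply Finset.sum_le_sum
          intro v _
          rw [nsmul_eq_mul]
          apply mul_le_mul_of_nonneg_right _ (zpow_nonneg' hγ0 _)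
          have := hfiber v
          have : ((s.filter (fun η => Φ η = v)).card : ℝ) ≤ (m : ℝ) := by exact_mod_cast this
          have hmn' : (m : ℝ) ≤ (n : ℝ) := by exact_mod_cast hmn
          linarith
      _ = (n + 1 : ℝ) * ∑ v ∈ s.image Φ, γ ^ Ssum v := by rw [mul_sum]
      _ ≤ (n + 1 : ℝ) * ∑ v ∈ tt, γ ^ Ssum v := by
          apply mul_le_mul_of_nonneg_left _ (by positivity)
          apply sum_le_sum_of_subset_of_nonneg
          · intro v hv
            rw [mem_image] at hv
            obtain ⟨η, hη, rfl⟩ := hv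
            exact hΦmem η hη
          · intro v _ _
            exact zpow_nonneg' hγ0 _

lemma Ssum_not {m : ℕ} (η : Fin m → Bool) : Ssum (fun k => !(η k)) = - Ssum η := by
  rw [Ssum, Ssum, ← Finset.sum_neg_distrib]
  exact Finset.sum_congr rfl fun k _ => val_not (η k)

lemma Ssum_eq_card {m : ℕ} (η : Fin m → Bool) :
    Ssum η = 2 * ((univ.filter fun k => η k = true).card : ℤ) - m := by
  have h : ∀ k, val (η k) = 2 * (if η k = true then (1:ℤ) else 0) - 1 := by
    intro k
    cases h : η k <;> simp [val, h]
  rw [Ssum]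
  rw [Finset.sum_congr rfl fun k _ => h k]
  rw [Finset.sum_sub_distrib, ← Finset.mul_sum, Finset.sum_boole, Finset.sum_const,
    Finset.card_univ, Fintype.card_fin]
  simp

lemma card_level {m k₀ : ℕ} :
    (univ.filter fun η : Fin m → Bool => (univ.filter fun k => η k = true).card = k₀).card
      = m.choose k₀ := by
  classical
  have hpc := Finset.card_powersetCard k₀ (univ : Finset (Fin m))
  rw [card_univ, Fintype.card_fin] at hpc
  rw [← hpc]
  apply Finset.card_bij (fun η _ => univ.filter fun k => η k = true)
  · intro η hη
    rw [mem_filter] at hη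
    rw [Finset.mem_powersetCard]
    exact ⟨filter_subset _ _, hη.2⟩
  · intro η₁ h₁ η₂ h₂ heq
    funext k
    have := Finset.ext_iff.mp heq k
    simp only [mem_filter, mem_univ, true_and] at this
    cases h1 : η₁ k <;> cases h2 : η₂ k <;> simp [h1, h2] at this ⊢
  · intro A hA
    rw [Finset.mem_powersetCard] at hA
    refine ⟨fun k => decide (k ∈ A), ?_, ?_⟩
    · rw [mem_filter]
      refine ⟨mem_univ _, ?_⟩
      rw [← hA.2]
      congr 1
      ext k
      simp
    · ext k
      simp

lemma sumGood_ge {m n : ℕ} (hmn : m ≤ n) {γ : ℝ} (hγ : 1 ≤ γ) :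
    ∑ η : Fin m → Bool, γ ^ Ssum η
    ≤ (2 * (n + 1) : ℝ) * ∑ η ∈ univ.filter
        (fun η : Fin m → Bool => Good γ (Ssum η)), γ ^ Ssum η := by
  classical
  rcases eq_or_lt_of_le hγ with hγ1 | hγ1
  · -- γ = 1
    have hγe : γ = 1 := hγ1.symm
    subst hγe
    simp only [one_zpow]
    set k₀ := (m + m % 2) / 2 with hk₀
    have hsub : (univ.filter fun η : Fin m → Bool => Ssum η = ((m % 2 : ℕ) : ℤ))
        ⊆ univ.filter (fun η : Fin m → Bool => Good (1:ℝ) (Ssum η)) := by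
      intro η hη
      rw [mem_filter] at hη ⊢
      refine ⟨mem_univ _, ?_⟩
      rw [hη.2]
      constructor
      · positivity
      · intro _
        have : m % 2 ≤ 1 := by omega
        exact_mod_cast this
    have hlevel : (univ.filter fun η : Fin m → Bool => Ssum η = ((m % 2 : ℕ) : ℤ))
        = univ.filter fun η : Fin m → Bool => (univ.filter fun k => η k = true).card = k₀ := by
      apply filter_congr
      intro η _
      rw [Ssum_eq_card]
      constructor
      · intro h; omega
      · intro h; rw [h]; omega
    have hcard : (univ.filter fun η : Fin m → Bool => Ssum η = ((m % 2 : ℕ) : ℤ)).card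
        = m.choose k₀ := by rw [hlevel]; exact card_level
    have hchoose : 2 ^ m ≤ (m + 1) * m.choose k₀ := by
      have h1 : m - k₀ = m / 2 := by omega
      have h2 : m.choose (m / 2) = m.choose k₀ := by
        rw [← h1]
        exact Nat.choose_symm (by omega)
      calc 2 ^ m = ∑ i ∈ range (m + 1), m.choose i := (Nat.sum_range_choose m).symm
        _ ≤ (range (m + 1)).card • m.choose (m / 2) :=
            Finset.sum_le_card_nsmul _ _ _ (fun i _ => Nat.choose_le_middle i m)
        _ = (m + 1) * m.choose k₀ := by rw [card_range, smul_eq_mul, h2]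
    have hnat : 2 ^ m ≤ 2 * (n + 1) *
        (univ.filter (fun η : Fin m → Bool => Good (1:ℝ) (Ssum η))).card := by
      calc 2 ^ m ≤ (m + 1) * m.choose k₀ := hchoose
        _ ≤ (2 * (n + 1)) *
            (univ.filter (fun η : Fin m → Bool => Good (1:ℝ) (Ssum η))).card := by
            apply Nat.mul_le_mul (by omega)
            rw [← hcard]
            exact card_le_card hsub
    have e1 : ∑ _η : Fin m → Bool, (1:ℝ) = ((2^m : ℕ) : ℝ) := by
      rw [Finset.sum_const, Finset.card_univ, Fintype.card_fun, Fintype.card_fin,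
        Fintype.card_bool, nsmul_eq_mul, mul_one]
    have e2 : ∑ _η ∈ univ.filter (fun η : Fin m → Bool => Good (1:ℝ) (Ssum η)), (1:ℝ)
        = (((univ.filter (fun η : Fin m → Bool => Good (1:ℝ) (Ssum η))).card : ℕ) : ℝ) := by
      rw [Finset.sum_const, nsmul_eq_mul, mul_one]
    rw [e1, e2]
    exact_mod_cast hnat
  · -- 1 < γ
    have hγ0 : 0 < γ := by linarith
    have hgood : ∀ η : Fin m → Bool, Good γ (Ssum η) ↔ 0 ≤ Ssum η := by
      intro η
      constructor
      · exact And.left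
      · intro h
        exact ⟨h, fun he => absurd he (by linarith)⟩
    have hneg : ∑ η ∈ univ.filter (fun η : Fin m → Bool => ¬ 0 ≤ Ssum η), γ ^ Ssum η
        ≤ ∑ η ∈ univ.filter (fun η : Fin m → Bool => 0 ≤ Ssum η), γ ^ Ssum η := by
      have h1 : ∑ η ∈ univ.filter (fun η : Fin m → Bool => ¬ 0 ≤ Ssum η), γ ^ Ssum η
          = ∑ v ∈ univ.filter (fun v : Fin m → Bool => 0 < Ssum v), γ ^ (- Ssum v) := by
        apply Finset.sum_nbij' (i := fun η => fun k => !(η k)) (j := fun η => fun k => !(η k))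
        · intro a ha
          rw [mem_filter] at ha ⊢
          refine ⟨mem_univ _, ?_⟩
          rw [Ssum_not]
          omega
        · intro a ha
          rw [mem_filter] at ha ⊢
          refine ⟨mem_univ _, ?_⟩
          rw [Ssum_not]
          omega
        · intro a _; funext k; exact Bool.not_not (a k)
        · intro a _; funext k; exact Bool.not_not (a k)
        · intro a _
          rw [Ssum_not, neg_neg]
      rw [h1]
      calc ∑ v ∈ univ.filter (fun v : Fin m → Bool => 0 < Ssum v), γ ^ (- Ssum v)
          ≤ ∑ v ∈ univ.filter (fun v : Fin m → Bool => 0 < Ssum v), γ ^ Ssum v := by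
            apply Finset.sum_le_sum
            intro v hv
            rw [mem_filter] at hv
            exact zpow_le_zpow_right₀ hγ (by omega)
        _ ≤ ∑ v ∈ univ.filter (fun v : Fin m → Bool => 0 ≤ Ssum v), γ ^ Ssum v := by
            apply sum_le_sum_of_subset_of_nonneg
            · intro v hv
              rw [mem_filter] at hv ⊢
              exact ⟨hv.1, le_of_lt hv.2⟩
            · intro v _ _
              exact zpow_nonneg' hγ0 _
    have hsplit := Finset.sum_filter_add_sum_filter_not univ
      (fun η : Fin m → Bool => 0 ≤ Ssum η) (fun η => γ ^ Ssum η)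
    have hGfilter : (univ.filter fun η : Fin m → Bool => Good γ (Ssum η))
        = univ.filter (fun η : Fin m → Bool => 0 ≤ Ssum η) :=
      filter_congr fun η _ => hgood η
    rw [hGfilter]
    have hpos : (0:ℝ) ≤ ∑ η ∈ univ.filter (fun η : Fin m → Bool => 0 ≤ Ssum η), γ ^ Ssum η :=
      Finset.sum_nonneg fun η _ => zpow_nonneg' hγ0 _
    have hn1 : (1:ℝ) ≤ (n+1:ℝ) := by
      have : (0:ℝ) ≤ (n:ℝ) := Nat.cast_nonneg n
      linarith
    nlinarith [hneg, hsplit, hpos]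

lemma oneD {m n : ℕ} (hmn : m ≤ n) {γ : ℝ} (hγ : 1 ≤ γ) :
    ∑ η : Fin m → Bool, γ ^ Ssum η
    ≤ (2 * (n + 1)^2 : ℝ) * ∑ η ∈ univ.filter
        (fun η : Fin m → Bool => (∀ c, 0 ≤ psum η c) ∧ Good γ (Ssum η)), γ ^ Ssum η := by
  have hγ0 : 0 < γ := by linarith
  calc ∑ η : Fin m → Bool, γ ^ Ssum η
      ≤ (2 * (n + 1) : ℝ) * ∑ η ∈ univ.filter
        (fun η : Fin m → Bool => Good γ (Ssum η)), γ ^ Ssum η := sumGood_ge hmn hγ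
    _ ≤ (2 * (n + 1) : ℝ) * ((n + 1 : ℝ) * ∑ η ∈ univ.filter
        (fun η : Fin m → Bool => (∀ c, 0 ≤ psum η c) ∧ Good γ (Ssum η)), γ ^ Ssum η) := by
        apply mul_le_mul_of_nonneg_left (sumNN_ge hmn hγ0) (by positivity)
    _ = (2 * (n + 1)^2 : ℝ) * ∑ η ∈ univ.filter
        (fun η : Fin m → Bool => (∀ c, 0 ≤ psum η c) ∧ Good γ (Ssum η)), γ ^ Ssum η := by
        ring

lemma zpow_sum' {a : ℝ} (ha : a ≠ 0) {ι : Type*} (s : Finset ι) (f : ι → ℤ) :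
    a ^ (∑ i ∈ s, f i) = ∏ i ∈ s, a ^ f i := by
  classical
  induction s using Finset.cons_induction with
  | empty => simp
  | cons i s hi ih => rw [sum_cons, prod_cons, zpow_add₀ ha, ih]

lemma filter_lt_succ {m : ℕ} (c : ℕ) (hc : c < m) :
    univ.filter (fun k : Fin m => (k : ℕ) < c + 1)
      = insert ⟨c, hc⟩ (univ.filter (fun k : Fin m => (k : ℕ) < c)) := by
  ext k
  simp only [mem_filter, mem_univ, true_and, mem_insert]
  constructor
  · intro h
    rcases Nat.lt_succ_iff_lt_or_eq.mp h with h | h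
    · exact Or.inr h
    · exact Or.inl (Fin.ext h)
  · rintro (rfl | h)
    · exact Nat.lt_succ_self c
    · exact h.trans (Nat.lt_succ_self c)

lemma card_initseg {m : ℕ} (c : ℕ) (hc : c ≤ m) :
    (univ.filter fun x : Fin m => (x : ℕ) < c).card = c := by
  induction c with
  | zero => simp
  | succ c ih =>
    have hcm : c < m := by omega
    rw [filter_lt_succ c hcm, card_insert_of_notMem (by simp), ih (by omega)]

lemma downset_eq {m : ℕ} (A : Finset (Fin m))
    (hA : ∀ k k' : Fin m, k' ≤ k → k ∈ A → k' ∈ A) :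
    A = univ.filter (fun k : Fin m => (k : ℕ) < A.card) := by
  ext k
  simp only [mem_filter, mem_univ, true_and]
  constructor
  · intro hk
    have hsub : univ.filter (fun x : Fin m => (x : ℕ) < (k : ℕ) + 1) ⊆ A := by
      intro x hx
      rw [mem_filter] at hx
      exact hA k x (by rw [Fin.le_def]; omega) hk
    have hcard := card_le_card hsub
    rw [card_initseg ((k : ℕ) + 1) k.isLt] at hcard
    omega
  · intro hk
    by_contra hkA
    have hsub : A ⊆ univ.filter (fun x : Fin m => (x : ℕ) < (k : ℕ)) := by
      intro x hx
      rw [mem_filter]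
      refine ⟨mem_univ _, ?_⟩
      by_contra hxk
      exact hkA (hA x k (by rw [Fin.le_def]; omega) hx)
    have hcard := card_le_card hsub
    rw [card_initseg (k : ℕ) (le_of_lt k.isLt)] at hcard
    omega

/-! ### Walk level -/

def PS {d n : ℕ} (w : Fin n → Fin d → ℤ) (j : Fin d) (K : ℕ) : ℤ :=
  ∑ i ∈ univ.filter (fun i : Fin n => (i : ℕ) < K), w i j

def tot {d n : ℕ} (w : Fin n → Fin d → ℤ) (j : Fin d) : ℤ := ∑ i, w i j

lemma PS_n_eq_tot {d n : ℕ} (w : Fin n → Fin d → ℤ) (j : Fin d) : PS w j n = tot w j := by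
  rw [PS, tot]
  congr 1
  ext i
  simp [i.isLt]

def wc {d n : ℕ} {S : Finset (Fin d → ℤ)} (w : Fin n → {σ // σ ∈ S}) :
    Fin n → Fin d → ℤ := fun i => (w i).1

def CG {d n : ℕ} {S : Finset (Fin d → ℤ)} (γ : Fin d → ℝ) (J : Finset (Fin d))
    (w : Fin n → {σ // σ ∈ S}) : Prop :=
  ∀ j ∈ J, (∀ K ≤ n, 0 ≤ PS (wc w) j K) ∧ Good (γ j) (tot (wc w) j)

noncomputable def AA {d : ℕ} (n : ℕ) {S : Finset (Fin d → ℤ)} (γ : Fin d → ℝ)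
    (J : Finset (Fin d)) : ℝ :=
  ∑ w ∈ (univ : Finset (Fin n → {σ // σ ∈ S})).filter (CG γ J),
    ∏ j, γ j ^ (tot (wc w) j)

lemma AA_empty {d n : ℕ} {S : Finset (Fin d → ℤ)} (γ : Fin d → ℝ) (hγ : ∀ j, 0 < γ j) :
    AA n (S := S) γ ∅ = (inventory d S γ) ^ n := by
  classical
  rw [AA]
  rw [Finset.filter_true_of_mem (fun w _ => by intro j hj; exact absurd hj (notMem_empty j))]
  have h1 : ∀ w : Fin n → {σ // σ ∈ S},
      ∏ j, γ j ^ (tot (wc w) j) = ∏ i, ∏ j, γ j ^ ((w i).1 j) := by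
    intro w
    rw [← Finset.prod_comm]
    apply Finset.prod_congr rfl
    intro j _
    rw [tot, zpow_sum' (ne_of_gt (hγ j))]
    rfl
  rw [Finset.sum_congr rfl fun w _ => h1 w]
  have h2 := Finset.prod_univ_sum (fun _ : Fin n => (univ : Finset {σ // σ ∈ S}))
    (fun _ (σ : {σ // σ ∈ S}) => ∏ j, γ j ^ (σ.1 j))
  rw [Fintype.piFinset_univ] at h2
  rw [← h2, Finset.prod_const, Finset.card_univ, Fintype.card_fin]
  congr 1
  rw [inventory, ← Finset.sum_coe_sort S (fun σ => ∏ j, γ j ^ (σ j))]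

lemma abs_mem {d : ℕ} {S : Finset (Fin d → ℤ)} (hR : Reflectable d S) {σ : Fin d → ℤ}
    (hσ : σ ∈ S) (j₀ : Fin d) : Function.update σ j₀ |σ j₀| ∈ S := by
  rcases le_or_gt 0 (σ j₀) with h | h
  · rw [abs_of_nonneg h, Function.update_eq_self]; exact hσ
  · rw [abs_of_neg h]; exact hR σ hσ j₀

lemma upd_mem {d : ℕ} {S : Finset (Fin d → ℤ)} (hR : Reflectable d S) {σ : Fin d → ℤ}
    (hσ : σ ∈ S) (j₀ : Fin d) (b : Bool) (h1 : σ j₀ = 1) :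
    Function.update σ j₀ (val b) ∈ S := by
  cases b
  · have h : val false = -(σ j₀) := by rw [h1]; rfl
    rw [h]; exact hR σ hσ j₀
  · have h : val true = σ j₀ := by rw [h1]; rfl
    rw [h, Function.update_eq_self]; exact hσ

def mask {d n : ℕ} {S : Finset (Fin d → ℤ)} (hR : Reflectable d S) (j₀ : Fin d)
    (w : Fin n → {σ // σ ∈ S}) : Fin n → {σ // σ ∈ S} :=
  fun i => ⟨Function.update (w i).1 j₀ |(w i).1 j₀|, abs_mem hR (w i).2 j₀⟩

lemma val_abs (b : Bool) : |val b| = 1 := by cases b <;> simp [val]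

lemma fiber_ineq {d n : ℕ} {S : Finset (Fin d → ℤ)} (hR : Reflectable d S)
    (γ : Fin d → ℝ) (hγ : ∀ j, 1 ≤ γ j) (j₀ : Fin d) (J : Finset (Fin d)) (hj₀ : j₀ ∉ J)
    (v : Fin n → {σ // σ ∈ S}) (hv : ∀ i, (v i).1 j₀ = 0 ∨ (v i).1 j₀ = 1) :
    ∑ w ∈ univ.filter (fun w : Fin n → {σ // σ ∈ S} => mask hR j₀ w = v),
        (if CG γ J w then ∏ j, γ j ^ (tot (wc w) j) else 0)
    ≤ (2 * ((n : ℝ) + 1)^2) *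
      ∑ w ∈ univ.filter (fun w : Fin n → {σ // σ ∈ S} => mask hR j₀ w = v),
        (if CG γ (insert j₀ J) w then ∏ j, γ j ^ (tot (wc w) j) else 0) := by
  classical
  have hγ0 : ∀ j, (0:ℝ) < γ j := fun j => lt_of_lt_of_le one_pos (hγ j)
  set T : Finset (Fin n) := univ.filter (fun i : Fin n => (v i).1 j₀ ≠ 0) with hTdef
  set m : ℕ := T.card with hmdef
  have hmn : m ≤ n := by
    rw [hmdef]
    calc T.card ≤ (univ : Finset (Fin n)).card := card_le_card (filter_subset _ _)
      _ = n := by rw [card_univ, Fintype.card_fin]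
  set e : Fin m ≃o {x // x ∈ T} := T.orderIsoOfFin hmdef.symm with hedef
  have hT1 : ∀ i, i ∈ T → (v i).1 j₀ = 1 := by
    intro i h
    rw [hTdef, mem_filter] at h
    rcases hv i with h0 | h1
    · exact absurd h0 h.2
    · exact h1
  have hT0 : ∀ i, i ∉ T → (v i).1 j₀ = 0 := by
    intro i h
    by_contra h0
    exact h (by rw [hTdef, mem_filter]; exact ⟨mem_univ i, h0⟩)
  set ι : (Fin m → Bool) → (Fin n → {σ // σ ∈ S}) := fun η i =>
    if h : i ∈ T then
      ⟨Function.update (v i).1 j₀ (val (η (e.symm ⟨i, h⟩))),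
        upd_mem hR (v i).2 j₀ _ (hT1 i h)⟩
    else v i with hιdef
  set κ : (Fin n → {σ // σ ∈ S}) → (Fin m → Bool) :=
    fun w k => decide ((w ((e k) : {x // x ∈ T}).1).1 j₀ = 1) with hκdef
  have hιT : ∀ η i (h : i ∈ T),
      (ι η i).1 = Function.update (v i).1 j₀ (val (η (e.symm ⟨i, h⟩))) := by
    intro η i h
    simp only [hιdef, dif_pos h]
  have hιnT : ∀ η i, i ∉ T → ι η i = v i := by
    intro η i h
    simp only [hιdef, dif_neg h]
  have hιj : ∀ η i j, j ≠ j₀ → (ι η i).1 j = (v i).1 j := by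
    intro η i j hj
    by_cases h : i ∈ T
    · rw [hιT η i h, Function.update_of_ne hj]
    · rw [hιnT η i h]
  have hιj₀T : ∀ η i (h : i ∈ T), (ι η i).1 j₀ = val (η (e.symm ⟨i, h⟩)) := by
    intro η i h
    rw [hιT η i h, Function.update_self]
  have hιj₀nT : ∀ η i, i ∉ T → (ι η i).1 j₀ = 0 := by
    intro η i h
    rw [hιnT η i h]
    exact hT0 i h
  -- mask (ι η) = v
  have hmaskι : ∀ η, mask hR j₀ (ι η) = v := by
    intro η
    funext i
    apply Subtype.ext
    show Function.update (ι η i).1 j₀ |(ι η i).1 j₀| = (v i).1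
    by_cases h : i ∈ T
    · rw [hιT η i h, Function.update_idem, Function.update_self, val_abs,
        ← hT1 i h, Function.update_eq_self]
    · rw [hιnT η i h]
      have habs : |(v i).1 j₀| = (v i).1 j₀ := by rw [hT0 i h]; simp
      rw [habs, Function.update_eq_self]
  -- κ (ι η) = η
  have hκι : ∀ η, κ (ι η) = η := by
    intro η
    funext k
    have hk : ((e k) : {x // x ∈ T}).1 ∈ T := (e k).2
    show decide ((ι η ((e k) : {x // x ∈ T}).1).1 j₀ = 1) = η k
    rw [hιj₀T η _ hk]
    have hsub : (⟨((e k) : {x // x ∈ T}).1, hk⟩ : {x // x ∈ T}) = e k := Subtype.ext rfl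
    rw [hsub, OrderIso.symm_apply_apply]
    cases hb : η k <;> simp [val]
  -- ι (κ w) = w on the fiber
  have hικ : ∀ w, mask hR j₀ w = v → ι (κ w) = w := by
    intro w hw
    have hmw : ∀ i, (v i).1 = Function.update (w i).1 j₀ |(w i).1 j₀| := by
      intro i
      have h := congrFun hw i
      rw [← h]
      rfl
    have hwj : ∀ i j, j ≠ j₀ → (v i).1 j = (w i).1 j := by
      intro i j hj
      rw [hmw i, Function.update_of_ne hj]
    have hwj₀ : ∀ i, (v i).1 j₀ = |(w i).1 j₀| := by
      intro i
      rw [hmw i, Function.update_self]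
    funext i
    apply Subtype.ext
    by_cases h : i ∈ T
    · rw [hιT (κ w) i h]
      have habs : |(w i).1 j₀| = 1 := by rw [← hwj₀ i]; exact hT1 i h
      have hw1 : (w i).1 j₀ = 1 ∨ (w i).1 j₀ = -1 :=
        (abs_eq (by norm_num : (0:ℤ) ≤ 1)).mp habs
      have hval : val (κ w (e.symm ⟨i, h⟩)) = (w i).1 j₀ := by
        show val (decide ((w ((e (e.symm ⟨i, h⟩)) : {x // x ∈ T}).1).1 j₀ = 1)) = _
        rw [OrderIso.apply_symm_apply]
        rcases hw1 with h' | h' <;> rw [h'] <;> simp [val]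
      rw [hval]
      funext j
      by_cases hj : j = j₀
      · subst hj
        rw [Function.update_self]
      · rw [Function.update_of_ne hj]
        exact hwj i j hj
    · rw [hιnT (κ w) i h]
      funext j
      by_cases hj : j = j₀
      · subst hj
        rw [hT0 i h]
        have habs0 : |(w i).1 j| = 0 := by rw [← hwj₀ i]; exact hT0 i h
        exact (abs_eq_zero.mp habs0).symm
      · exact hwj i j hj
  -- transport of sums
  have key : ∀ f : (Fin n → {σ // σ ∈ S}) → ℝ,
      ∑ w ∈ univ.filter (fun w => mask hR j₀ w = v), f w = ∑ η : Fin m → Bool, f (ι η) := by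
    intro f
    apply Finset.sum_nbij' (i := fun w => κ w) (j := fun η => ι η)
    · intro a _; exact mem_univ _
    · intro η _
      rw [mem_filter]
      exact ⟨mem_univ _, hmaskι η⟩
    · intro a ha
      rw [mem_filter] at ha
      exact hικ a ha.2
    · intro η _
      exact hκι η
    · intro a ha
      rw [mem_filter] at ha
      rw [hικ a ha.2]
  -- coordinates of ι η
  have htotj : ∀ η j, j ≠ j₀ → tot (wc (ι η)) j = tot (wc v) j := by
    intro η j hj
    exact Finset.sum_congr rfl fun i _ => hιj η i j hj
  have htotj₀ : ∀ η, tot (wc (ι η)) j₀ = Ssum η := by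
    intro η
    rw [tot]
    have h1 : ∑ i, (wc (ι η) i) j₀ = ∑ i ∈ T, (wc (ι η) i) j₀ :=
      (Finset.sum_subset (subset_univ T) (fun i _ hi => hιj₀nT η i hi)).symm
    rw [h1, ← Finset.sum_coe_sort T (fun i => (wc (ι η) i) j₀),
      ← Equiv.sum_comp e.toEquiv (fun x : {x // x ∈ T} => (wc (ι η) x.1) j₀)]
    apply Finset.sum_congr rfl
    intro k _
    show (ι η ((e k) : {x // x ∈ T}).1).1 j₀ = val (η k)
    rw [hιj₀T η _ (e k).2]
    congr 1
    have hsub : (⟨((e k) : {x // x ∈ T}).1, (e k).2⟩ : {x // x ∈ T}) = e k := Subtype.ext rfl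
    rw [hsub, OrderIso.symm_apply_apply]
  -- prefix sums in coordinate j₀
  have hPS : ∀ η K, PS (wc (ι η)) j₀ K
      = psum η (univ.filter (fun k : Fin m => (((e k) : {x // x ∈ T}).1 : ℕ) < K)).card := by
    intro η K
    set A : Finset (Fin m) := univ.filter (fun k : Fin m => (((e k) : {x // x ∈ T}).1 : ℕ) < K)
      with hAdef
    have hdown : A = univ.filter (fun k : Fin m => (k : ℕ) < A.card) := by
      apply downset_eq
      intro k k' hk hkA
      rw [hAdef, mem_filter] at hkA ⊢
      refine ⟨mem_univ _, ?_⟩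
      have hmono : (e k' : {x // x ∈ T}) ≤ e k := e.monotone hk
      have : (((e k') : {x // x ∈ T}).1 : ℕ) ≤ (((e k) : {x // x ∈ T}).1 : ℕ) := hmono
      omega
    rw [PS]
    have hstep1 : ∑ i ∈ univ.filter (fun i : Fin n => (i : ℕ) < K), (wc (ι η) i) j₀
        = ∑ i ∈ T.filter (fun i : Fin n => (i : ℕ) < K), (wc (ι η) i) j₀ := by
      apply (Finset.sum_subset ?_ ?_).symm
      · exact Finset.filter_subset_filter _ (subset_univ T)
      · intro i hi hni
        rw [mem_filter] at hi
        apply hιj₀nT η i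
        intro hiT
        exact hni (mem_filter.mpr ⟨hiT, hi.2⟩)
    rw [hstep1]
    have hstep2 : ∑ i ∈ T.filter (fun i : Fin n => (i : ℕ) < K), (wc (ι η) i) j₀
        = ∑ k ∈ A, val (η k) := by
      symm
      apply Finset.sum_bij (i := fun k _ => ((e k) : {x // x ∈ T}).1)
      · intro k hk
        rw [hAdef, mem_filter] at hk
        exact mem_filter.mpr ⟨(e k).2, hk.2⟩
      · intro k₁ h₁ k₂ h₂ heq
        have : (e k₁ : {x // x ∈ T}) = e k₂ := Subtype.ext heq
        exact e.injective this
      · intro i hi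
        rw [mem_filter] at hi
        refine ⟨e.symm ⟨i, hi.1⟩, ?_, ?_⟩
        · rw [hAdef, mem_filter]
          refine ⟨mem_univ _, ?_⟩
          rw [OrderIso.apply_symm_apply]
          exact hi.2
        · rw [OrderIso.apply_symm_apply]
      · intro k hk
        show val (η k) = (ι η ((e k) : {x // x ∈ T}).1).1 j₀
        rw [hιj₀T η _ (e k).2]
        congr 1
        have hsub : (⟨((e k) : {x // x ∈ T}).1, (e k).2⟩ : {x // x ∈ T}) = e k := Subtype.ext rfl
        rw [hsub, OrderIso.symm_apply_apply]
    rw [hstep2]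
    conv_lhs => rw [hdown]
    rfl
  -- equivalence of conditions in coordinate j₀
  have hCj₀ : ∀ η, ((∀ K ≤ n, 0 ≤ PS (wc (ι η)) j₀ K) ∧ Good (γ j₀) (tot (wc (ι η)) j₀))
      ↔ ((∀ c, 0 ≤ psum η c) ∧ Good (γ j₀) (Ssum η)) := by
    intro η
    rw [htotj₀ η]
    constructor
    · rintro ⟨hK, hg⟩
      refine ⟨?_, hg⟩
      intro c
      by_cases hc : c < m
      · set K := ((((e ⟨c, hc⟩) : {x // x ∈ T}).1 : Fin n) : ℕ) with hKdef
        have hAc : (univ.filter (fun k : Fin m =>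
            (((e k) : {x // x ∈ T}).1 : ℕ) < K)).card = c := by
          have hset : univ.filter (fun k : Fin m => (((e k) : {x // x ∈ T}).1 : ℕ) < K)
              = univ.filter (fun k : Fin m => (k : ℕ) < c) := by
            apply filter_congr
            intro k _
            simp only [eq_iff_iff, hKdef]
            calc ((((e k) : {x // x ∈ T}).1 : Fin n) : ℕ)
                  < ((((e ⟨c, hc⟩) : {x // x ∈ T}).1 : Fin n) : ℕ)
                ↔ (((e k) : {x // x ∈ T}).1 : Fin n)
                  < (((e ⟨c, hc⟩) : {x // x ∈ T}).1 : Fin n) := Fin.lt_def.symm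
              _ ↔ (e k : {x // x ∈ T}) < e ⟨c, hc⟩ := Subtype.coe_lt_coe
              _ ↔ k < ⟨c, hc⟩ := e.lt_iff_lt
              _ ↔ (k : ℕ) < c := Fin.lt_def
          rw [hset, card_initseg c (le_of_lt hc)]
        have hKn : K ≤ n := le_of_lt (((e ⟨c, hc⟩) : {x // x ∈ T}).1).isLt
        have := hK K hKn
        rw [hPS η K, hAc] at this
        exact this
      · rw [psum_of_le η c (by omega)]
        exact hg.1
    · rintro ⟨hc, hg⟩
      refine ⟨?_, hg⟩
      intro K _
      rw [hPS η K]
      exact hc _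
  -- conditions for j ∈ J transfer to v
  have hCGJ : ∀ η, CG γ J (ι η) ↔ CG γ J v := by
    intro η
    unfold CG
    constructor
    · intro h j hj
      have hne : j ≠ j₀ := fun he => hj₀ (he ▸ hj)
      obtain ⟨h1, h2⟩ := h j hj
      have hpseq : ∀ K, PS (wc (ι η)) j K = PS (wc v) j K := fun K =>
        Finset.sum_congr rfl fun i _ => hιj η i j hne
      refine ⟨fun K hK => by rw [← hpseq K]; exact h1 K hK, ?_⟩
      rw [← htotj η j hne]
      exact h2
    · intro h j hj
      have hne : j ≠ j₀ := fun he => hj₀ (he ▸ hj)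
      obtain ⟨h1, h2⟩ := h j hj
      have hpseq : ∀ K, PS (wc (ι η)) j K = PS (wc v) j K := fun K =>
        Finset.sum_congr rfl fun i _ => hιj η i j hne
      refine ⟨fun K hK => by rw [hpseq K]; exact h1 K hK, ?_⟩
      rw [htotj η j hne]
      exact h2
  -- weight of ι η
  have hwt : ∀ η, ∏ j, γ j ^ tot (wc (ι η)) j
      = (∏ j ∈ univ.erase j₀, γ j ^ tot (wc v) j) * γ j₀ ^ Ssum η := by
    intro η
    rw [← Finset.mul_prod_erase univ _ (mem_univ j₀), htotj₀ η]
    rw [Finset.prod_congr rfl (fun j hj => by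
      rw [htotj η j (Finset.ne_of_mem_erase hj)])]
    ring
  -- assemble
  rw [key (fun w => if CG γ J w then ∏ j, γ j ^ tot (wc w) j else 0),
    key (fun w => if CG γ (insert j₀ J) w then ∏ j, γ j ^ tot (wc w) j else 0)]
  by_cases hCGv : CG γ J v
  · have hins : ∀ η, CG γ (insert j₀ J) (ι η)
        ↔ ((∀ c, 0 ≤ psum η c) ∧ Good (γ j₀) (Ssum η)) := by
      intro η
      constructor
      · intro h
        exact (hCj₀ η).mp (h j₀ (mem_insert_self _ _))
      · intro h j hj
        rcases mem_insert.mp hj with rfl | hjJ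
        · exact (hCj₀ η).mpr h
        · exact ((hCGJ η).mpr hCGv) j hjJ
    have hL : ∀ η : Fin m → Bool, (if CG γ J (ι η) then ∏ j, γ j ^ tot (wc (ι η)) j else 0)
        = (∏ j ∈ univ.erase j₀, γ j ^ tot (wc v) j) * γ j₀ ^ Ssum η := by
      intro η
      rw [if_pos ((hCGJ η).mpr hCGv), hwt η]
    have hRR : ∀ η : Fin m → Bool,
        (if CG γ (insert j₀ J) (ι η) then ∏ j, γ j ^ tot (wc (ι η)) j else 0)
        = (∏ j ∈ univ.erase j₀, γ j ^ tot (wc v) j) *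
          (if ((∀ c, 0 ≤ psum η c) ∧ Good (γ j₀) (Ssum η)) then γ j₀ ^ Ssum η else 0) := by
      intro η
      by_cases h : (∀ c, 0 ≤ psum η c) ∧ Good (γ j₀) (Ssum η)
      · rw [if_pos ((hins η).mpr h), if_pos h, hwt η]
      · rw [if_neg (fun hh => h ((hins η).mp hh)), if_neg h, mul_zero]
    rw [Finset.sum_congr rfl fun η _ => hL η, Finset.sum_congr rfl fun η _ => hRR η]
    rw [← Finset.mul_sum, ← Finset.mul_sum]
    have hcv : (0:ℝ) ≤ ∏ j ∈ univ.erase j₀, γ j ^ tot (wc v) j :=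
      Finset.prod_nonneg fun j _ => zpow_nonneg' (hγ0 j) _
    have h1d := oneD (n := n) hmn (hγ j₀)
    have hconv : ∑ η : Fin m → Bool,
        (if ((∀ c, 0 ≤ psum η c) ∧ Good (γ j₀) (Ssum η)) then γ j₀ ^ Ssum η else 0)
        = ∑ η ∈ univ.filter
            (fun η : Fin m → Bool => (∀ c, 0 ≤ psum η c) ∧ Good (γ j₀) (Ssum η)),
          γ j₀ ^ Ssum η := (Finset.sum_filter _ _).symm
    rw [hconv]
    calc (∏ j ∈ univ.erase j₀, γ j ^ tot (wc v) j) * ∑ η : Fin m → Bool, γ j₀ ^ Ssum η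
        ≤ (∏ j ∈ univ.erase j₀, γ j ^ tot (wc v) j) *
          ((2 * ((n:ℝ) + 1)^2) * ∑ η ∈ univ.filter
            (fun η : Fin m → Bool => (∀ c, 0 ≤ psum η c) ∧ Good (γ j₀) (Ssum η)),
            γ j₀ ^ Ssum η) := by
          apply mul_le_mul_of_nonneg_left _ hcv
          exact_mod_cast h1d
      _ = (2 * ((n:ℝ) + 1)^2) * ((∏ j ∈ univ.erase j₀, γ j ^ tot (wc v) j) *
          ∑ η ∈ univ.filter
            (fun η : Fin m → Bool => (∀ c, 0 ≤ psum η c) ∧ Good (γ j₀) (Ssum η)),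
            γ j₀ ^ Ssum η) := by ring
  · have hL : ∀ η : Fin m → Bool,
        (if CG γ J (ι η) then ∏ j, γ j ^ tot (wc (ι η)) j else 0) = 0 := by
      intro η
      exact if_neg (fun h => hCGv ((hCGJ η).mp h))
    rw [Finset.sum_congr rfl fun η _ => hL η, Finset.sum_const_zero]
    apply mul_nonneg (by positivity)
    apply Finset.sum_nonneg
    intro η _
    by_cases h : CG γ (insert j₀ J) (ι η)
    · rw [if_pos h]
      exact Finset.prod_nonneg fun j _ => zpow_nonneg' (hγ0 j) _
    · rw [if_neg h]

lemma AA_insert {d n : ℕ} {S : Finset (Fin d → ℤ)} (hR : Reflectable d S)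
    (hS : IsStepset d S) (γ : Fin d → ℝ) (hγ : ∀ j, 1 ≤ γ j)
    {J : Finset (Fin d)} {j₀ : Fin d} (hj₀ : j₀ ∉ J) :
    AA n (S := S) γ J ≤ (2 * ((n:ℝ) + 1)^2) * AA n (S := S) γ (insert j₀ J) := by
  classical
  rw [AA, AA, Finset.sum_filter, Finset.sum_filter]
  rw [← Finset.sum_fiberwise_of_maps_to (g := mask hR j₀) (t := univ.image (mask hR j₀))
    (fun w _ => mem_image_of_mem _ (mem_univ w))
    (fun w => if CG γ J w then ∏ j, γ j ^ tot (wc w) j else 0)]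
  rw [← Finset.sum_fiberwise_of_maps_to (g := mask hR j₀) (t := univ.image (mask hR j₀))
    (fun w _ => mem_image_of_mem _ (mem_univ w))
    (fun w => if CG γ (insert j₀ J) w then ∏ j, γ j ^ tot (wc w) j else 0)]
  rw [Finset.mul_sum]
  apply Finset.sum_le_sum
  intro v hv'
  obtain ⟨u, -, rfl⟩ := mem_image.mp hv'
  have hv : ∀ i, (mask hR j₀ u i).1 j₀ = 0 ∨ (mask hR j₀ u i).1 j₀ = 1 := by
    intro i
    show Function.update (u i).1 j₀ |(u i).1 j₀| j₀ = 0 ∨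
      Function.update (u i).1 j₀ |(u i).1 j₀| j₀ = 1
    rw [Function.update_self]
    rcases hS (u i).1 (u i).2 j₀ with h | h | h <;> rw [h] <;> norm_num
  exact fiber_ineq hR γ hγ j₀ J hj₀ (mask hR j₀ u) hv

lemma AA_le_univ {d n : ℕ} {S : Finset (Fin d → ℤ)} (hR : Reflectable d S)
    (hS : IsStepset d S) (γ : Fin d → ℝ) (hγ : ∀ j, 1 ≤ γ j) (J : Finset (Fin d)) :
    AA n (S := S) γ ∅ ≤ (2 * ((n:ℝ) + 1)^2)^(J.card) * AA n (S := S) γ J := by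
  classical
  induction J using Finset.induction with
  | empty => simp
  | @insert a s ha ih =>
    calc AA n (S := S) γ ∅ ≤ (2 * ((n:ℝ) + 1)^2)^(s.card) * AA n (S := S) γ s := ih
      _ ≤ (2 * ((n:ℝ) + 1)^2)^(s.card) *
          ((2 * ((n:ℝ) + 1)^2) * AA n (S := S) γ (insert a s)) := by
          apply mul_le_mul_of_nonneg_left (AA_insert hR hS γ hγ ha) (by positivity)
      _ = (2 * ((n:ℝ) + 1)^2)^((insert a s).card) * AA n (S := S) γ (insert a s) := by
          rw [card_insert_of_notMem ha]
          ring

lemma zpow_le_zpow_base {a b : ℝ} (ha : 0 < a) (hab : a ≤ b) {t : ℤ} (ht : 0 ≤ t) :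
    a ^ t ≤ b ^ t := by
  lift t to ℕ using ht
  rw [zpow_natCast, zpow_natCast]
  exact pow_le_pow_left₀ (le_of_lt ha) hab _

lemma tot_nonneg {d n : ℕ} {S : Finset (Fin d → ℤ)} (w : Fin n → {σ // σ ∈ S})
    (hconf : Confined d (fun i => (w i).1)) (j : Fin d) : 0 ≤ tot (wc w) j := by
  have h := hconf n le_rfl j
  rw [← PS_n_eq_tot]
  exact h

lemma qcount_le {d n : ℕ} {S : Finset (Fin d → ℤ)} (α γ : Fin d → ℝ)
    (hα : ∀ j, 0 < α j) (hαγ : ∀ j, α j ≤ γ j) (hγ1 : ∀ j, 1 ≤ γ j) :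
    qcount d S α n ≤ inventory d S γ ^ n := by
  classical
  have hγ0 : ∀ j, (0:ℝ) < γ j := fun j => lt_of_lt_of_le one_pos (hγ1 j)
  rw [← AA_empty (n := n) (S := S) γ hγ0, qcount, AA]
  have hft : (univ.filter (CG (n := n) (S := S) γ ∅)) = univ := by
    apply Finset.filter_true_of_mem
    intro w _
    intro j hj
    exact absurd hj (notMem_empty j)
  rw [hft]
  set F := Finset.univ.filter
    (fun w : Fin n → {σ // σ ∈ S} => Confined d (fun i => (w i).1)) with hF
  have h1 : ∑ w ∈ F, ∏ j, α j ^ (∑ i, (w i).1 j)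
      ≤ ∑ w ∈ F, ∏ j, γ j ^ (tot (wc w) j) := by
    apply Finset.sum_le_sum
    intro w hw
    rw [hF, mem_filter] at hw
    apply Finset.prod_le_prod
    · intro j _
      exact zpow_nonneg' (hα j) _
    · intro j _
      exact zpow_le_zpow_base (hα j) (hαγ j) (tot_nonneg w hw.2 j)
  have h2 : ∑ w ∈ F, ∏ j, γ j ^ (tot (wc w) j)
      ≤ ∑ w : Fin n → {σ // σ ∈ S}, ∏ j, γ j ^ (tot (wc w) j) := by
    apply sum_le_sum_of_subset_of_nonneg (by rw [hF]; exact filter_subset _ _)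
    intro w _ _
    exact Finset.prod_nonneg fun j _ => zpow_nonneg' (hγ0 j) _
  exact le_trans h1 h2

lemma perj {a g : ℝ} (ha : 0 < a) (hg : g = max a 1) {t : ℤ} (hgood : Good g t) :
    min a 1 * g ^ t ≤ a ^ t := by
  rcases le_or_gt 1 a with h | h
  · have hga : g = a := by rw [hg, max_eq_left h]
    have hmin : min a 1 = 1 := min_eq_right h
    rw [hga, hmin, one_mul]
  · have hg1 : g = 1 := by rw [hg, max_eq_right (le_of_lt h)]
    have hmin : min a 1 = a := min_eq_left (le_of_lt h)
    have ht : t = 0 ∨ t = 1 := by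
      have h1 := hgood.1
      have h2 := hgood.2 hg1
      omega
    rcases ht with rfl | rfl
    · rw [hg1, hmin]
      simp only [zpow_zero, mul_one]
      exact le_of_lt h
    · rw [hg1, hmin]
      simp

lemma qcount_ge {d n : ℕ} {S : Finset (Fin d → ℤ)} (α γ : Fin d → ℝ)
    (hα : ∀ j, 0 < α j) (hplus : ∀ j, γ j = max (α j) 1) :
    (∏ j, min (α j) 1) * AA n (S := S) γ univ ≤ qcount d S α n := by
  classical
  have hγ0 : ∀ j, (0:ℝ) < γ j := fun j => by
    rw [hplus j]; exact lt_of_lt_of_le one_pos (le_max_right _ _)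
  rw [AA, qcount, Finset.mul_sum]
  set F1 := univ.filter (CG (n := n) (S := S) γ univ) with hF1
  have h1 : ∑ w ∈ F1,
        (∏ j, min (α j) 1) * ∏ j, γ j ^ (tot (wc w) j)
      ≤ ∑ w ∈ F1, ∏ j, α j ^ (∑ i, (w i).1 j) := by
    apply Finset.sum_le_sum
    intro w hw
    rw [hF1, mem_filter] at hw
    rw [← Finset.prod_mul_distrib]
    apply Finset.prod_le_prod
    · intro j _
      exact mul_nonneg (le_of_lt (lt_min (hα j) one_pos)) (zpow_nonneg' (hγ0 j) _)
    · intro j _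
      exact perj (hα j) (hplus j) (hw.2 j (mem_univ j)).2
  have h2 : ∑ w ∈ F1, ∏ j, α j ^ (∑ i, (w i).1 j)
      ≤ ∑ w ∈ Finset.univ.filter
        (fun w : Fin n → {σ // σ ∈ S} => Confined d (fun i => (w i).1)),
          ∏ j, α j ^ (∑ i, (w i).1 j) := by
    apply sum_le_sum_of_subset_of_nonneg
    · intro w hw
      rw [hF1, mem_filter] at hw
      rw [mem_filter]
      refine ⟨mem_univ _, ?_⟩
      intro K hK j
      exact (hw.2 j (mem_univ j)).1 K hK
    · intro w _ _
      exact Finset.prod_nonneg fun j _ => zpow_nonneg' (hα j) _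
  exact le_trans h1 h2


end EGR

open EGR Finset Filter


/-- The exponential growth rate of the weighted counts is `S(α⁺)`. -/
theorem exponential_growth_rate
    (d : ℕ) (hd : 1 ≤ d) (S : Finset (Fin d → ℤ))
    (hstep : IsStepset d S) (hrefl : Reflectable d S) (hnt : NontrivialStepset d S)
    (α : Fin d → ℝ) (hα : ∀ j, 0 < α j)
    (αplus : Fin d → ℝ) (hαplus : ∀ j, αplus j = max (α j) 1) :
    (∀ n, 0 < qcount d S α n) ∧
    Filter.Tendsto (fun n : ℕ => (qcount d S α n) ^ ((n : ℝ)⁻¹))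
      Filter.atTop (nhds (inventory d S αplus)) := by
  classical
  have hγ1 : ∀ j, 1 ≤ αplus j := fun j => by rw [hαplus j]; exact le_max_right _ _
  have hγ0 : ∀ j, 0 < αplus j := fun j => lt_of_lt_of_le one_pos (hγ1 j)
  have hαγ : ∀ j, α j ≤ αplus j := fun j => by rw [hαplus j]; exact le_max_left _ _
  set I := inventory d S αplus with hI
  have hIpos : 0 < I := by
    rw [hI, inventory]
    obtain ⟨σ, hσ, -⟩ := hnt ⟨0, hd⟩
    apply Finset.sum_pos
    · intro τ _
      exact Finset.prod_pos fun j _ => zpow_pos (hγ0 j) _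
    · exact ⟨σ, hσ⟩
  set c₀ : ℝ := ∏ j, min (α j) 1 with hc₀def
  have hc₀ : 0 < c₀ := Finset.prod_pos fun j _ => lt_min (hα j) one_pos
  have hup : ∀ n : ℕ, qcount d S α n ≤ I ^ n := fun n => qcount_le (n := n) α αplus hα hαγ hγ1
  set L : ℕ → ℝ := fun n => c₀ * ((2 * ((n : ℝ) + 1) ^ 2) ^ d)⁻¹ with hLdef
  have hLpos : ∀ n, 0 < L n := fun n => by rw [hLdef]; positivity
  have hlow : ∀ n : ℕ, L n * I ^ n ≤ qcount d S α n := by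
    intro n
    have hCpos : (0:ℝ) < (2 * ((n : ℝ) + 1) ^ 2) ^ d := by positivity
    have h1 : I ^ n ≤ (2 * ((n : ℝ) + 1) ^ 2) ^ d * AA n (S := S) αplus univ := by
      have h2 := AA_le_univ (n := n) hrefl hstep αplus hγ1 univ
      rw [AA_empty (n := n) (S := S) αplus hγ0] at h2
      rwa [card_univ, Fintype.card_fin] at h2
    have h4 : ((2 * ((n : ℝ) + 1) ^ 2) ^ d)⁻¹ * I ^ n ≤ AA n (S := S) αplus univ := by
      rw [inv_mul_le_iff₀ hCpos]
      exact h1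
    have h5 : c₀ * (((2 * ((n : ℝ) + 1) ^ 2) ^ d)⁻¹ * I ^ n)
        ≤ c₀ * AA n (S := S) αplus univ :=
      mul_le_mul_of_nonneg_left h4 (le_of_lt hc₀)
    have h3 := qcount_ge (n := n) (S := S) α αplus hα hαplus
    calc L n * I ^ n = c₀ * (((2 * ((n : ℝ) + 1) ^ 2) ^ d)⁻¹ * I ^ n) := by
          rw [hLdef]; ring
      _ ≤ c₀ * AA n (S := S) αplus univ := h5
      _ ≤ qcount d S α n := h3
  have hqpos : ∀ n, 0 < qcount d S α n := by
    intro n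
    have hp : 0 < L n * I ^ n := mul_pos (hLpos n) (pow_pos hIpos n)
    exact lt_of_lt_of_le hp (hlow n)
  refine ⟨hqpos, ?_⟩
  -- limit of log (L n) / n
  have hlogL : ∀ n : ℕ, Real.log (L n)
      = Real.log c₀ - (d : ℝ) * (Real.log 2 + 2 * Real.log ((n : ℝ) + 1)) := by
    intro n
    rw [hLdef]
    simp only []
    rw [Real.log_mul (ne_of_gt hc₀) (by positivity), Real.log_inv, Real.log_pow,
      Real.log_mul (by norm_num) (by positivity), Real.log_pow]
    push_cast
    ring
  have hinv : Tendsto (fun n : ℕ => ((n : ℝ))⁻¹) atTop (nhds 0) :=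
    tendsto_inv_atTop_nhds_zero_nat
  have hlogn : Tendsto (fun n : ℕ => Real.log ((n : ℝ) + 1) * ((n : ℝ))⁻¹) atTop (nhds 0) := by
    have ha : Tendsto (fun n : ℕ => Real.log ((n : ℝ) + 1) / ((n : ℝ) + 1)) atTop (nhds 0) :=
      (Real.isLittleO_log_id_atTop.tendsto_div_nhds_zero).comp
        (tendsto_atTop_add_const_right atTop 1 tendsto_natCast_atTop_atTop)
    have hb : Tendsto (fun n : ℕ => ((n : ℝ) + 1) * ((n : ℝ))⁻¹) atTop (nhds 1) := by
      have heq : ∀ᶠ n : ℕ in atTop, 1 + ((n : ℝ))⁻¹ = ((n : ℝ) + 1) * ((n : ℝ))⁻¹ := by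
        filter_upwards [Filter.eventually_ge_atTop 1] with n hn
        have hn0 : ((n : ℝ)) ≠ 0 := Nat.cast_ne_zero.mpr (by omega)
        field_simp
      have hlim : Tendsto (fun n : ℕ => 1 + ((n : ℝ))⁻¹) atTop (nhds 1) := by
        simpa using hinv.const_add (1 : ℝ)
      exact hlim.congr' heq
    have hmul := ha.mul hb
    rw [zero_mul] at hmul
    apply hmul.congr
    intro n
    have h1 : ((n : ℝ) + 1) ≠ 0 := by positivity
    field_simp
  have hlog : Tendsto (fun n : ℕ => Real.log (L n) * ((n : ℝ))⁻¹) atTop (nhds 0) := by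
    have h1 := hinv.const_mul (Real.log c₀ - (d : ℝ) * Real.log 2)
    have h2 := hlogn.const_mul (2 * (d : ℝ))
    have h3 := h1.sub h2
    simp only [mul_zero, sub_zero, zero_sub, neg_zero] at h3
    apply h3.congr
    intro n
    rw [hlogL n]
    ring
  have hLn1 : Tendsto (fun n : ℕ => (L n) ^ ((n : ℝ))⁻¹) atTop (nhds 1) := by
    have hexp : Tendsto (fun n : ℕ => Real.exp (Real.log (L n) * ((n : ℝ))⁻¹)) atTop
        (nhds (Real.exp 0)) := (Real.continuous_exp.tendsto 0).comp hlog
    rw [Real.exp_zero] at hexp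
    apply hexp.congr
    intro n
    exact (Real.rpow_def_of_pos (hLpos n) _).symm
  have hgtend : Tendsto (fun n : ℕ => (L n) ^ ((n : ℝ))⁻¹ * I) atTop (nhds I) := by
    have := hLn1.mul_const I
    simpa using this
  apply tendsto_of_tendsto_of_tendsto_of_le_of_le' hgtend tendsto_const_nhds
  · filter_upwards [Filter.eventually_ge_atTop 1] with n hn
    have hn0 : ((n : ℝ)) ≠ 0 := Nat.cast_ne_zero.mpr (by omega)
    have h2 : ((L n) * I ^ n) ^ ((n : ℝ))⁻¹ = (L n) ^ ((n : ℝ))⁻¹ * I := by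
      rw [Real.mul_rpow (le_of_lt (hLpos n)) (by positivity)]
      congr 1
      rw [← Real.rpow_natCast I n, ← Real.rpow_mul (le_of_lt hIpos),
        mul_inv_cancel₀ hn0, Real.rpow_one]
    rw [← h2]
    exact Real.rpow_le_rpow (by positivity) (hlow n) (by positivity)
  · filter_upwards [Filter.eventually_ge_atTop 1] with n hn
    have hn0 : ((n : ℝ)) ≠ 0 := Nat.cast_ne_zero.mpr (by omega)
    have h2 : ((I : ℝ) ^ n) ^ ((n : ℝ))⁻¹ = I := by
      rw [← Real.rpow_natCast I n, ← Real.rpow_mul (le_of_lt hIpos),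
        mul_inv_cancel₀ hn0, Real.rpow_one]
    rw [← h2]
    exact Real.rpow_le_rpow (le_of_lt (hqpos n)) (hup n) (by positivity)
end

section
/- Let S ⊆ {−1,0,1}^d be a nontrivial reflectable stepset, let α ∈ (ℝ_{>0})^d with r := #{j : α_j ≤ 1} (coordinates ordered so α_j ≤ 1 exactly for j ≤ r), and define f : ℝ^r → ℂ by f(θ) := Σ_{σ∈S} (∏_{k≤r} e^{−iθ_k σ_k})(∏_{k>r} α_k^{σ_k}), and P_k := Σ_{σ∈S, σ_k=1} ∏_{j≠k} (α_j⁺)^{σ_j} for 1 ≤ k ≤ r. Then: (a) f(0) = S(α⁺) > 0 and |f(θ)| ≤ S(α⁺) for all θ ∈ ℝ^r; (b) all first partial derivatives of f vanish at 0; (c) all mixed second partial derivatives ∂²f/∂θ_u∂θ_v(0) with u ≠ v vanish; (d) ∂²f/∂θ_k²(0) = −2P_k with P_k > 0. Consequently, on a neighbourhood of 0 where the principal logarithm applies, the phase φ(θ) := log S(α⁺) − log f(θ) satisfies φ(0) = 0, has vanishing gradient at 0, has nonsingular diagonal Hessian at 0 with diagonal entries 2P_k/S(α⁺), and satisfies Re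 φ(θ) ≥ 0. -/
open scoped BigOperators Classical

/-- Partial derivative in direction `k` of a function on `ℝ^r`. -/
noncomputable def pd {r : ℕ} (k : Fin r) (g : (Fin r → ℝ) → ℂ) : (Fin r → ℝ) → ℂ :=
  fun θ => deriv (fun s => g (Function.update θ k s)) (θ k)

noncomputable def T {d r : ℕ} (hrd : r ≤ d) (S : Finset (Fin d → ℤ))
    (w : (Fin d → ℤ) → ℂ) (θ : Fin r → ℝ) : ℂ :=
  ∑ σ ∈ S, w σ * Complex.exp (-Complex.I *
    ∑ k : Fin r, (θ k : ℂ) * (σ (Fin.castLE hrd k) : ℂ))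

lemma T_zero {d r : ℕ} (hrd : r ≤ d) (S : Finset (Fin d → ℤ)) (w : (Fin d → ℤ) → ℂ) :
    T hrd S w 0 = ∑ σ ∈ S, w σ := by
  simp [T]

lemma T_cont {d r : ℕ} (hrd : r ≤ d) (S : Finset (Fin d → ℤ)) (w : (Fin d → ℤ) → ℂ) :
    Continuous (T hrd S w) := by
  unfold T; fun_prop

lemma T_hasDerivAt {d r : ℕ} (hrd : r ≤ d) (S : Finset (Fin d → ℤ))
    (w : (Fin d → ℤ) → ℂ) (θ : Fin r → ℝ) (v : Fin r) (s₀ : ℝ) :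
    HasDerivAt (fun s : ℝ => T hrd S w (Function.update θ v s))
      (T hrd S (fun σ => (-Complex.I * (σ (Fin.castLE hrd v) : ℂ)) * w σ)
        (Function.update θ v s₀)) s₀ := by
  unfold T
  apply HasDerivAt.fun_sum
  intro σ _
  have key : ∀ s : ℝ, (-Complex.I *
      ∑ k : Fin r, ((Function.update θ v s k : ℝ) : ℂ) * (σ (Fin.castLE hrd k) : ℂ))
      = (-Complex.I * (σ (Fin.castLE hrd v) : ℂ)) * (s : ℂ)
        + (-Complex.I * ∑ k ∈ Finset.univ.erase v, (θ k : ℂ) * (σ (Fin.castLE hrd k) : ℂ)) := by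
    intro s
    rw [← Finset.add_sum_erase _ _ (Finset.mem_univ v)]
    rw [Finset.sum_congr rfl (fun k hk => by
      rw [Function.update_of_ne (Finset.ne_of_mem_erase hk)] :
      ∀ k ∈ Finset.univ.erase v,
        ((Function.update θ v s k : ℝ) : ℂ) * (σ (Fin.castLE hrd k) : ℂ)
          = (θ k : ℂ) * (σ (Fin.castLE hrd k) : ℂ))]
    rw [Function.update_self]
    ring
  simp only [key]
  set a : ℂ := -Complex.I * (σ (Fin.castLE hrd v) : ℂ) with ha
  set C : ℂ := -Complex.I * ∑ k ∈ Finset.univ.erase v, (θ k : ℂ) * (σ (Fin.castLE hrd k) : ℂ)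
  have hz : HasDerivAt (fun z : ℂ => w σ * Complex.exp (a * z + C))
      (a * w σ * Complex.exp (a * (s₀ : ℂ) + C)) (s₀ : ℂ) := by
    have h := ((((hasDerivAt_id (s₀ : ℂ)).const_mul a).add_const C).cexp).const_mul (w σ)
    simp only [id_eq] at h
    rw [show a * w σ * Complex.exp (a * (s₀ : ℂ) + C)
      = w σ * (Complex.exp (a * (s₀ : ℂ) + C) * (a * 1)) by ring]
    exact h
  have := hz.comp_ofReal
  convert this using 1

lemma pd_T {d r : ℕ} (hrd : r ≤ d) (S : Finset (Fin d → ℤ))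
    (w : (Fin d → ℤ) → ℂ) (v : Fin r) (θ : Fin r → ℝ) :
    pd v (T hrd S w) θ
      = T hrd S (fun σ => (-Complex.I * (σ (Fin.castLE hrd v) : ℂ)) * w σ) θ := by
  have h := T_hasDerivAt hrd S w θ v (θ v)
  rw [Function.update_eq_self] at h
  exact h.deriv

lemma refl_sum_zero {d : ℕ} {S : Finset (Fin d → ℤ)} (hrefl : Reflectable d S)
    (j : Fin d) (F : (Fin d → ℤ) → ℂ)
    (hF : ∀ σ ∈ S, F (Function.update σ j (-(σ j))) = -F σ) :
    ∑ σ ∈ S, F σ = 0 := by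
  refine Finset.sum_involution (fun σ _ => Function.update σ j (-(σ j)))
    (fun σ hσ => by rw [hF σ hσ]; ring)
    (fun σ hσ hne h => hne ?_)
    (fun σ hσ => hrefl σ hσ j)
    (fun σ hσ => by simp)
  have h1 := hF σ hσ
  replace h : Function.update σ j (-(σ j)) = σ := h
  rw [h] at h1
  have h2 : (2 : ℂ) * F σ = 0 := by linear_combination h1
  simpa using h2

theorem phase_function_properties
    (d : ℕ) (hd : 1 ≤ d) (S : Finset (Fin d → ℤ))
    (hstep : IsStepset d S) (hrefl : Reflectable d S) (hnt : NontrivialStepset d S)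
    (α : Fin d → ℝ) (hα : ∀ j, 0 < α j)
    (r : ℕ) (hrd : r ≤ d)
    -- coordinates are ordered so that α_j ≤ 1 exactly for the first r of them
    (hord : ∀ j : Fin d, (j : ℕ) < r ↔ α j ≤ 1)
    (αplus : Fin d → ℝ) (hαplus : ∀ j, αplus j = max (α j) 1)
    (f : (Fin r → ℝ) → ℂ)
    (hf : ∀ θ, f θ =
      ∑ σ ∈ S, (∏ k : Fin r,
          Complex.exp (-Complex.I * (θ k : ℂ) * (σ (Fin.castLE hrd k) : ℂ))) *
        ∏ k ∈ Finset.univ.filter (fun k : Fin d => r ≤ (k : ℕ)), (α k : ℂ) ^ (σ k))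
    (P : Fin r → ℝ)
    (hP : ∀ k, P k = ∑ σ ∈ S.filter (fun σ => σ (Fin.castLE hrd k) = 1),
        ∏ j ∈ Finset.univ.erase (Fin.castLE hrd k), αplus j ^ (σ j))
    (φ : (Fin r → ℝ) → ℂ)
    (hφ : ∀ θ, φ θ = Complex.log ((inventory d S αplus : ℝ) : ℂ) - Complex.log (f θ)) :
    -- (a)
    (f 0 = ((inventory d S αplus : ℝ) : ℂ) ∧ 0 < inventory d S αplus ∧
      ∀ θ, ‖f θ‖ ≤ inventory d S αplus) ∧
    -- (b)
    (∀ k, pd k f 0 = 0) ∧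
    -- (c)
    (∀ u v, u ≠ v → pd u (pd v f) 0 = 0) ∧
    -- (d)
    (∀ k, 0 < P k ∧ pd k (pd k f) 0 = -(2 * (P k : ℂ))) ∧
    -- consequently, the phase φ has the required properties near 0
    (∃ U : Set (Fin r → ℝ), IsOpen U ∧ (0 : Fin r → ℝ) ∈ U ∧
      (∀ θ ∈ U, f θ ≠ 0 ∧ 0 ≤ (φ θ).re) ∧
      φ 0 = 0 ∧
      (∀ k, pd k φ 0 = 0) ∧
      (∀ u v, u ≠ v → pd u (pd v φ) 0 = 0) ∧
      (∀ k, pd k (pd k φ) 0 = ((2 * P k / inventory d S αplus : ℝ) : ℂ)) ∧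
      (Matrix.diagonal (fun k : Fin r =>
        ((2 * P k / inventory d S αplus : ℝ) : ℂ))).det ≠ 0) := by
  classical
  set c : (Fin d → ℤ) → ℂ :=
    fun σ => ∏ k ∈ Finset.univ.filter (fun k : Fin d => r ≤ (k : ℕ)), (α k : ℂ) ^ (σ k) with hc
  set cR : (Fin d → ℤ) → ℝ :=
    fun σ => ∏ k ∈ Finset.univ.filter (fun k : Fin d => r ≤ (k : ℕ)), (α k) ^ (σ k) with hcRdef
  have hcRpos : ∀ σ, 0 < cR σ := fun σ => Finset.prod_pos fun k _ => zpow_pos (hα k) _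
  have hccR : ∀ σ, c σ = ((cR σ : ℝ) : ℂ) := by
    intro σ; rw [hc, hcRdef]; push_cast; ring
  -- f in T form
  have hfT : ∀ θ, f θ = T hrd S c θ := by
    intro θ
    rw [hf]
    refine Finset.sum_congr rfl fun σ _ => ?_
    rw [← Complex.exp_sum]
    rw [show (∑ k : Fin r, -Complex.I * (θ k : ℂ) * (σ (Fin.castLE hrd k) : ℂ))
        = -Complex.I * ∑ k : Fin r, (θ k : ℂ) * (σ (Fin.castLE hrd k) : ℂ) by
      rw [Finset.mul_sum]; exact Finset.sum_congr rfl fun k _ => by ring]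
    exact mul_comm _ _
  have hfeq : f = T hrd S c := funext hfT
  -- αplus facts
  have hαp1 : ∀ v : Fin r, αplus (Fin.castLE hrd v) = 1 := by
    intro v
    rw [hαplus]
    exact max_eq_right ((hord _).1 (by simpa using v.isLt))
  have hαpgt : ∀ j : Fin d, r ≤ (j : ℕ) → αplus j = α j := by
    intro j hj
    rw [hαplus]
    refine max_eq_left ?_
    by_contra hle
    push_neg at hle
    have := (hord j).2 hle.le
    omega
  have hprod : ∀ σ : Fin d → ℤ, (∏ j, αplus j ^ (σ j)) = cR σ := by
    intro σ
    rw [hcRdef]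
    rw [← Finset.prod_filter_mul_prod_filter_not Finset.univ (fun k : Fin d => r ≤ (k : ℕ))
      (fun k => αplus k ^ (σ k))]
    have h2 : ∏ k ∈ Finset.univ.filter (fun k : Fin d => ¬ r ≤ (k : ℕ)), αplus k ^ (σ k) = 1 :=
      Finset.prod_eq_one fun k hk => by
        have hk' : (k : ℕ) < r := by
          have := (Finset.mem_filter.1 hk).2; omega
        rw [hαplus, max_eq_right ((hord k).1 hk'), one_zpow]
    rw [h2, mul_one]
    exact Finset.prod_congr rfl fun k hk => by rw [hαpgt k (Finset.mem_filter.1 hk).2]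
  have hinvR : inventory d S αplus = ∑ σ ∈ S, cR σ := by
    unfold inventory
    exact Finset.sum_congr rfl fun σ _ => hprod σ
  have hSne : S.Nonempty := by
    obtain ⟨σ, hσ, -⟩ := hnt ⟨0, hd⟩
    exact ⟨σ, hσ⟩
  have hinvpos : 0 < inventory d S αplus := by
    rw [hinvR]; exact Finset.sum_pos (fun σ _ => hcRpos σ) hSne
  have hinvC : ((inventory d S αplus : ℝ) : ℂ) = ∑ σ ∈ S, c σ := by
    rw [hinvR, Complex.ofReal_sum]
    exact Finset.sum_congr rfl fun σ _ => (hccR σ).symm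
  have ha1 : f 0 = ((inventory d S αplus : ℝ) : ℂ) := by
    rw [hfT, T_zero, hinvC]
  -- |f θ| ≤ inventory
  have habse : ∀ (θ : Fin r → ℝ) (σ : Fin d → ℤ),
      ‖Complex.exp (-Complex.I *
        ∑ k : Fin r, (θ k : ℂ) * (σ (Fin.castLE hrd k) : ℂ))‖ = 1 := by
    intro θ σ
    rw [Complex.norm_exp]
    have hz : (∑ k : Fin r, (θ k : ℂ) * (σ (Fin.castLE hrd k) : ℂ))
        = ((∑ k : Fin r, θ k * ((σ (Fin.castLE hrd k) : ℤ) : ℝ) : ℝ) : ℂ) := by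
      push_cast; ring
    rw [hz]
    simp [Complex.mul_re]
  have ha3 : ∀ θ, ‖f θ‖ ≤ inventory d S αplus := by
    intro θ
    rw [hfT]
    refine le_trans (norm_sum_le _ _) ?_
    rw [hinvR]
    refine le_of_eq (Finset.sum_congr rfl fun σ _ => ?_)
    rw [norm_mul, habse θ σ, mul_one, hccR, Complex.norm_real, Real.norm_eq_abs, abs_of_pos (hcRpos σ)]
  -- invariance of c under updates at coordinates < r
  have hcinv : ∀ (v : Fin r) (σ : Fin d → ℤ) (x : ℤ),
      c (Function.update σ (Fin.castLE hrd v) x) = c σ := by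
    intro v σ x
    rw [hc]
    refine Finset.prod_congr rfl fun k hk => ?_
    have hk' : r ≤ (k : ℕ) := (Finset.mem_filter.1 hk).2
    have hne : k ≠ Fin.castLE hrd v := by
      intro h
      rw [h] at hk'
      simp at hk'
      omega
    rw [Function.update_of_ne hne]
  -- first derivatives
  have hpdf : ∀ (v : Fin r) θ, pd v f θ
      = T hrd S (fun σ => (-Complex.I * (σ (Fin.castLE hrd v) : ℂ)) * c σ) θ := by
    intro v θ
    rw [hfeq]
    exact pd_T hrd S c v θ
  have hsum1 : ∀ v : Fin r,
      T hrd S (fun σ => (-Complex.I * (σ (Fin.castLE hrd v) : ℂ)) * c σ) 0 = 0 := by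
    intro v
    rw [T_zero]
    refine refl_sum_zero hrefl (Fin.castLE hrd v) _ fun σ hσ => ?_
    rw [hcinv v σ _, Function.update_self]
    push_cast
    ring
  have hb : ∀ k, pd k f 0 = 0 := fun k => by rw [hpdf, hsum1]
  -- second derivatives of f
  have hpd2f : ∀ u v : Fin r, ∀ θ, pd u (pd v f) θ
      = T hrd S (fun σ => (-Complex.I * (σ (Fin.castLE hrd u) : ℂ)) *
          ((-Complex.I * (σ (Fin.castLE hrd v) : ℂ)) * c σ)) θ := by
    intro u v θ
    rw [show pd v f = T hrd S (fun σ => (-Complex.I * (σ (Fin.castLE hrd v) : ℂ)) * c σ)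
      from funext (hpdf v)]
    exact pd_T hrd S _ u θ
  have hmix0 : ∀ u v : Fin r, u ≠ v →
      ∑ σ ∈ S, (-Complex.I * (σ (Fin.castLE hrd u) : ℂ)) *
        ((-Complex.I * (σ (Fin.castLE hrd v) : ℂ)) * c σ) = 0 := by
    intro u v huv
    refine refl_sum_zero hrefl (Fin.castLE hrd u) _ fun σ hσ => ?_
    have hne : Fin.castLE hrd v ≠ Fin.castLE hrd u := by
      intro h
      apply huv
      have : (v : ℕ) = (u : ℕ) := by simpa using congrArg Fin.val h
      exact (Fin.ext this).symm
    rw [hcinv u σ _, Function.update_self, Function.update_of_ne hne]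
    push_cast
    ring
  have hcc : ∀ u v, u ≠ v → pd u (pd v f) 0 = 0 := by
    intro u v huv
    rw [hpd2f, T_zero]
    exact hmix0 u v huv
  -- P facts
  have hPR : ∀ k : Fin r, P k = ∑ σ ∈ S.filter (fun σ => σ (Fin.castLE hrd k) = 1), cR σ := by
    intro k
    rw [hP]
    refine Finset.sum_congr rfl fun σ _ => ?_
    have h1 : (αplus (Fin.castLE hrd k)) ^ (σ (Fin.castLE hrd k)) *
        ∏ j ∈ Finset.univ.erase (Fin.castLE hrd k), αplus j ^ (σ j)
        = ∏ j, αplus j ^ (σ j) :=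
      Finset.mul_prod_erase Finset.univ (fun j => αplus j ^ (σ j)) (Finset.mem_univ _)
    rw [← hprod σ, ← h1, hαp1 k, one_zpow, one_mul]
  have hPC : ∀ k : Fin r, (P k : ℂ) = ∑ σ ∈ S.filter (fun σ => σ (Fin.castLE hrd k) = 1), c σ := by
    intro k
    rw [hPR, Complex.ofReal_sum]
    exact Finset.sum_congr rfl fun σ _ => (hccR σ).symm
  have hPpos : ∀ k : Fin r, 0 < P k := by
    intro k
    rw [hPR]
    refine Finset.sum_pos (fun σ _ => hcRpos σ) ?_
    obtain ⟨σ, hσ, hσ0⟩ := hnt (Fin.castLE hrd k)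
    rcases hstep σ hσ (Fin.castLE hrd k) with h | h | h
    · refine ⟨Function.update σ (Fin.castLE hrd k) (-(σ (Fin.castLE hrd k))), ?_⟩
      rw [Finset.mem_filter]
      exact ⟨hrefl σ hσ _, by rw [Function.update_self, h]; ring⟩
    · exact absurd h hσ0
    · exact ⟨σ, Finset.mem_filter.2 ⟨hσ, h⟩⟩
  have hdiag : ∀ k : Fin r,
      ∑ σ ∈ S, (-Complex.I * (σ (Fin.castLE hrd k) : ℂ)) *
        ((-Complex.I * (σ (Fin.castLE hrd k) : ℂ)) * c σ) = -(2 * (P k : ℂ)) := by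
    intro k
    have key : ∑ σ ∈ S, ((-Complex.I * (σ (Fin.castLE hrd k) : ℂ)) *
        ((-Complex.I * (σ (Fin.castLE hrd k) : ℂ)) * c σ)
        + (if σ (Fin.castLE hrd k) = 1 then 2 * c σ else 0)) = 0 := by
      refine refl_sum_zero hrefl (Fin.castLE hrd k) _ fun σ hσ => ?_
      rcases hstep σ hσ (Fin.castLE hrd k) with h | h | h <;>
        (simp [Function.update_self, h, hcinv k σ]; try linear_combination (2 * c σ) * Complex.I_sq)
    rw [Finset.sum_add_distrib] at key
    have hB : ∑ σ ∈ S, (if σ (Fin.castLE hrd k) = 1 then 2 * c σ else 0) = 2 * (P k : ℂ) := by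
      rw [← Finset.sum_filter, hPC k, Finset.mul_sum]
    rw [hB] at key
    exact eq_neg_of_add_eq_zero_left key
  have hdd : ∀ k, 0 < P k ∧ pd k (pd k f) 0 = -(2 * (P k : ℂ)) := by
    intro k
    exact ⟨hPpos k, by rw [hpd2f, T_zero]; exact hdiag k⟩
  -- phase part
  have hf0ne : f 0 ≠ 0 := by
    rw [ha1]; exact Complex.ofReal_ne_zero.2 hinvpos.ne'
  have hinvne : ((inventory d S αplus : ℝ) : ℂ) ≠ 0 := Complex.ofReal_ne_zero.2 hinvpos.ne'
  have hfcont : Continuous f := hfeq ▸ T_cont hrd S c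
  set U : Set (Fin r → ℝ) := {θ | 0 < (f θ).re} with hU
  have hUopen : IsOpen U := isOpen_lt continuous_const (Complex.continuous_re.comp hfcont)
  have h0U : (0 : Fin r → ℝ) ∈ U := by
    show 0 < (f 0).re
    rw [ha1]; simpa using hinvpos
  have hUne : ∀ θ ∈ U, f θ ≠ 0 := by
    intro θ hθ h0
    have h1 : 0 < (f θ).re := hθ
    rw [h0] at h1; simp at h1
  have hslit : ∀ θ ∈ U, f θ ∈ Complex.slitPlane := fun θ hθ =>
    Complex.mem_slitPlane_iff.2 (Or.inl hθ)
  have hre : ∀ θ ∈ U, 0 ≤ (φ θ).re := by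
    intro θ hθ
    rw [hφ, Complex.sub_re, Complex.log_re, Complex.log_re, sub_nonneg,
      Complex.norm_real, Real.norm_eq_abs, abs_of_pos hinvpos]
    exact Real.log_le_log (norm_pos_iff.2 (hUne θ hθ)) (ha3 θ)
  have hφ0 : φ 0 = 0 := by rw [hφ, ha1, sub_self]
  have hφpd : ∀ θ ∈ U, ∀ v : Fin r,
      HasDerivAt (fun s => φ (Function.update θ v s))
        (-(T hrd S (fun σ => (-Complex.I * (σ (Fin.castLE hrd v) : ℂ)) * c σ) θ / f θ)) (θ v) := by
    intro θ hθ v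
    have h1 : HasDerivAt (fun s => f (Function.update θ v s))
        (T hrd S (fun σ => (-Complex.I * (σ (Fin.castLE hrd v) : ℂ)) * c σ) θ) (θ v) := by
      rw [hfeq]
      have := T_hasDerivAt hrd S c θ v (θ v)
      rwa [Function.update_eq_self] at this
    have hsl : f (Function.update θ v (θ v)) ∈ Complex.slitPlane := by
      rw [Function.update_eq_self]; exact hslit θ hθ
    have h2a := HasDerivAt.clog_real (f := fun s => f (Function.update θ v s)) (x := θ v) h1 hsl
    have h2 := h2a.const_sub (Complex.log ((inventory d S αplus : ℝ) : ℂ))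
    simp only [Function.update_eq_self] at h2
    exact h2.congr_of_eventuallyEq (Filter.Eventually.of_forall fun s => hφ _)
  have hpdφval : ∀ θ ∈ U, ∀ v : Fin r, pd v φ θ
      = -(T hrd S (fun σ => (-Complex.I * (σ (Fin.castLE hrd v) : ℂ)) * c σ) θ / f θ) :=
    fun θ hθ v => (hφpd θ hθ v).deriv
  have hpdφ0 : ∀ k : Fin r, pd k φ 0 = 0 := by
    intro k
    rw [hpdφval 0 h0U k, hsum1 k]
    simp
  have hpd2φ : ∀ u v : Fin r, pd u (pd v φ) 0
      = -(T hrd S (fun σ => (-Complex.I * (σ (Fin.castLE hrd u) : ℂ)) *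
          ((-Complex.I * (σ (Fin.castLE hrd v) : ℂ)) * c σ)) 0)
        / ((inventory d S αplus : ℝ) : ℂ) := by
    intro u v
    have hupd0 : Function.update (0 : Fin r → ℝ) u (0 : ℝ) = 0 := by
      have := Function.update_eq_self u (0 : Fin r → ℝ)
      simpa using this
    have hucont : Continuous (fun s : ℝ => Function.update (0 : Fin r → ℝ) u s) :=
      continuous_const.update u continuous_id
    have hmem : ∀ᶠ s in nhds (0 : ℝ), Function.update (0 : Fin r → ℝ) u s ∈ U := by
      have h0' : Function.update (0 : Fin r → ℝ) u (0 : ℝ) ∈ U := by rw [hupd0]; exact h0U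
      have hca : ContinuousAt (fun s : ℝ => Function.update (0 : Fin r → ℝ) u s) 0 :=
        hucont.continuousAt
      exact hca.preimage_mem_nhds (hUopen.mem_nhds h0')
    have hA := T_hasDerivAt hrd S
      (fun σ => (-Complex.I * (σ (Fin.castLE hrd v) : ℂ)) * c σ) 0 u 0
    rw [hupd0] at hA
    have hB' : HasDerivAt (fun s : ℝ => f (Function.update 0 u s))
        (T hrd S (fun σ => (-Complex.I * (σ (Fin.castLE hrd u) : ℂ)) * c σ) 0) 0 := by
      rw [hfeq]
      have := T_hasDerivAt hrd S c 0 u 0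
      rwa [hupd0] at this
    have hBne : f (Function.update (0 : Fin r → ℝ) u (0 : ℝ)) ≠ 0 := by
      rw [hupd0]; exact hf0ne
    have hq := (hA.div hB' hBne).neg
    have hEv : (fun s : ℝ => pd v φ (Function.update 0 u s)) =ᶠ[nhds (0 : ℝ)]
        (fun s : ℝ => -(T hrd S (fun σ => (-Complex.I * (σ (Fin.castLE hrd v) : ℂ)) * c σ)
          (Function.update 0 u s) / f (Function.update 0 u s))) :=
      hmem.mono fun s hs => hpdφval _ hs v
    have hq' := hq.congr_of_eventuallyEq hEv
    have hderiv := hq'.deriv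
    show deriv (fun s => pd v φ (Function.update (0 : Fin r → ℝ) u s)) ((0 : Fin r → ℝ) u) = _
    rw [show ((0 : Fin r → ℝ) u) = (0 : ℝ) from rfl, hderiv, hupd0, hsum1 v, ha1]
    field_simp
    ring
  have hφmix : ∀ u v : Fin r, u ≠ v → pd u (pd v φ) 0 = 0 := by
    intro u v huv
    rw [hpd2φ u v, T_zero, hmix0 u v huv]
    simp
  have hφdiag : ∀ k : Fin r, pd k (pd k φ) 0
      = ((2 * P k / inventory d S αplus : ℝ) : ℂ) := by
    intro k
    rw [hpd2φ k k, T_zero, hdiag k, neg_neg]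
    push_cast
    ring
  refine ⟨⟨ha1, hinvpos, ha3⟩, hb, hcc, hdd, U, hUopen, h0U,
    fun θ hθ => ⟨hUne θ hθ, hre θ hθ⟩, hφ0, hpdφ0, hφmix, hφdiag, ?_⟩
  rw [Matrix.det_diagonal]
  refine Finset.prod_ne_zero_iff.2 fun k _ => Complex.ofReal_ne_zero.2 ?_
  have := hPpos k
  have := hinvpos
  positivity
end
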